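/- arXiv:2402.16787 — 5 statements merged into one kernel-verified Lean document; each statement's English description precedes it below -/
import Mathlib

section
/- Let G be a locally compact second countable group with left Haar measure λ_G, let Ω be a Polish space equipped with a free Borel G-action that admits a Borel fundamental domain F (a Borel subset meeting every orbit in exactly one point) such that the map i_G : G × F → Ω, i_G(g,x) = g·x, is a Borel isomorphism, and let μ be a G-invariant σ-finite Borel measure on Ω. Then there exists a Borel measure ν on F such that (i_G)_*(λ_G ⊗ ν) = μ. -/
open MeasureTheory Set
open scoped Pointwise ENNReal

/-- Auxiliary result: a σ-finite measure on `G × X` which is invariant under left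
translations in the `G`-coordinate is the product of the Haar measure with some
measure on `X`. -/
theorem exists_prod_eq_of_measurePreserving_mulLeft
    {G : Type*} [Group G] [TopologicalSpace G] [IsTopologicalGroup G]
    [LocallyCompactSpace G] [SecondCountableTopology G] [MeasurableSpace G] [BorelSpace G]
    (lamG : Measure G) [lamG.IsHaarMeasure]
    {X : Type*} [MeasurableSpace X]
    (μ' : Measure (G × X)) [SigmaFinite μ']
    (hinv : ∀ k : G, MeasurePreserving (fun p : G × X => (k * p.1, p.2)) μ' μ') :
    ∃ ν : Measure X, lamG.prod ν = μ' := by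
  classical
  -- a compact exhaustion of `G`
  let L : CompactExhaustion G := CompactExhaustion.choice G
  have hPB : ∀ n : ℕ, ∃ P : Set G, IsCompact P ∧ L n ⊆ interior P := fun n =>
    exists_compact_superset (L.isCompact n)
  choose P hPc hLP using hPB
  -- an increasing sequence of open sets covering `G`, each contained in a compact set
  set B : ℕ → Set G := fun n => ⋃ k ∈ Finset.range (n + 1), interior (P k) with hBdef
  have hBopen : ∀ n, IsOpen (B n) := fun n =>
    isOpen_biUnion fun k _ => isOpen_interior
  have hBmono : Monotone B := by
    intro a c hac x hx
    simp only [hBdef, Set.mem_iUnion, Finset.mem_range] at hx ⊢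
    obtain ⟨k, hk, hxk⟩ := hx
    exact ⟨k, by omega, hxk⟩
  have hLB : ∀ n, L n ⊆ B n := by
    intro n y hy
    simp only [hBdef, Set.mem_iUnion, Finset.mem_range]
    exact ⟨n, by omega, hLP n hy⟩
  set Q : ℕ → Set G := fun n => ⋃ k ∈ Finset.range (n + 1), P k with hQdef
  have hQc : ∀ n, IsCompact (Q n) := fun n =>
    (Finset.range (n + 1)).isCompact_biUnion fun k _ => hPc k
  have hBQ : ∀ n, B n ⊆ Q n := fun n =>
    Set.iUnion₂_mono fun k _ => interior_subset
  have hBuniv : ∀ g : G, ∃ n, g ∈ B n := by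
    intro g
    obtain ⟨n, hn⟩ := L.exists_mem g
    exact ⟨n, hLB n hn⟩
  -- spanning sets of `μ'`, confined to `B n` in the first coordinate
  set A : ℕ → Set (G × X) := spanningSets μ' with hAdef
  set C : ℕ → Set (G × X) := fun n => A n ∩ (B n ×ˢ (univ : Set X)) with hCdef
  have hCmeas : ∀ n, MeasurableSet (C n) := fun n =>
    (measurableSet_spanningSets μ' n).inter ((hBopen n).measurableSet.prod .univ)
  have hCmono : Monotone C := fun a b hab =>
    Set.inter_subset_inter (monotone_spanningSets μ' hab)
      (Set.prod_mono_left (hBmono hab))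
  have hCfin : ∀ n, μ' (C n) < ∞ := fun n =>
    lt_of_le_of_lt (measure_mono Set.inter_subset_left) (measure_spanningSets_lt_top μ' n)
  have hCuniv : ∀ p : G × X, ∃ n, p ∈ C n := by
    intro p
    obtain ⟨i, hi⟩ := iUnion_eq_univ_iff.1 (iUnion_spanningSets μ') p
    obtain ⟨j, hj⟩ := hBuniv p.1
    refine ⟨max i j, ?_, ?_, trivial⟩
    · exact monotone_spanningSets μ' (le_max_left i j) hi
    · exact hBmono (le_max_right i j) hj
  -- the auxiliary functions φ m
  set D : ℕ → Set (G × X) := fun m => (fun q : G × X => (q.1⁻¹, q.2)) ⁻¹' C m with hDdef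
  have hDmeas : ∀ m, MeasurableSet (D m) :=
    fun m => (measurable_fst.inv.prodMk measurable_snd) (hCmeas m)
  set φ : ℕ → X → ℝ≥0∞ := fun m x => lamG ((fun v => (v, x)) ⁻¹' D m) with hφdef
  have hφmeas : ∀ m, Measurable (φ m) := fun m => measurable_measure_prodMk_right (hDmeas m)
  -- the constants
  set d : ℕ → ℕ → ℝ≥0∞ := fun n m => μ' (C m) * lamG (B n * (B m)⁻¹) with hddef
  set el : ℕ → ℝ≥0∞ := fun k => μ' (C k) * lamG (B k * (B k)⁻¹) with heldef
  have hel_fin : ∀ k, el k < ∞ := by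
    intro k
    apply ENNReal.mul_lt_top (hCfin k)
    exact lt_of_le_of_lt
      (measure_mono (Set.mul_subset_mul (hBQ k) (Set.inv_subset_inv.2 (hBQ k))))
      ((hQc k).mul (hQc k).inv).measure_lt_top
  have hd_le : ∀ n m, d n m ≤ el n + el m := by
    intro n m
    rcases le_total n m with h | h
    · calc d n m ≤ el m := by
            exact mul_le_mul' le_rfl
              (measure_mono (Set.mul_subset_mul (hBmono h) Subset.rfl))
        _ ≤ el n + el m := le_add_self
    · calc d n m ≤ el n := by
            exact mul_le_mul' (measure_mono (hCmono h))
              (measure_mono (Set.mul_subset_mul Subset.rfl (Set.inv_subset_inv.2 (hBmono h))))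
        _ ≤ el n + el m := le_self_add
  set b : ℕ → ℝ≥0∞ := fun m => ((2 : ℝ≥0∞) ^ m)⁻¹ * (1 + el m)⁻¹ with hbdef
  have hb_le : ∀ m, b m ≤ ((2 : ℝ≥0∞) ^ m)⁻¹ := by
    intro m
    calc b m ≤ ((2 : ℝ≥0∞) ^ m)⁻¹ * 1 :=
          mul_le_mul' le_rfl (ENNReal.inv_le_one.2 le_self_add)
      _ = ((2 : ℝ≥0∞) ^ m)⁻¹ := mul_one _
  have hb_pos : ∀ m, 0 < b m := by
    intro m
    apply ENNReal.mul_pos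
    · exact (ENNReal.inv_ne_zero).2 (ENNReal.pow_ne_top (by norm_num))
    · exact (ENNReal.inv_ne_zero).2 (ENNReal.add_ne_top.2 ⟨ENNReal.one_ne_top, (hel_fin m).ne⟩)
  have hbd : ∀ n m, b m * d n m ≤ ((2 : ℝ≥0∞) ^ m)⁻¹ * (1 + el n) := by
    intro n m
    have h1 : (1 + el m)⁻¹ * d n m ≤ 1 + el n := by
      calc (1 + el m)⁻¹ * d n m ≤ (1 + el m)⁻¹ * (el n + el m) :=
            mul_le_mul' le_rfl (hd_le n m)
        _ = (1 + el m)⁻¹ * el n + (1 + el m)⁻¹ * el m := by ring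
        _ ≤ 1 * el n + (1 + el m)⁻¹ * (1 + el m) := by
            gcongr
            · exact ENNReal.inv_le_one.2 le_self_add
            · exact le_add_self
        _ = el n + (1 + el m)⁻¹ * (1 + el m) := by rw [one_mul]
        _ = el n + 1 := by
            rw [ENNReal.inv_mul_cancel
              ((zero_lt_one (α := ℝ≥0∞)).trans_le le_self_add).ne'
              (ENNReal.add_ne_top.2 ⟨ENNReal.one_ne_top, (hel_fin m).ne⟩)]
        _ = 1 + el n := add_comm _ _
    calc b m * d n m = ((2 : ℝ≥0∞) ^ m)⁻¹ * ((1 + el m)⁻¹ * d n m) := by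
          simp only [hbdef]; ring
      _ ≤ ((2 : ℝ≥0∞) ^ m)⁻¹ * (1 + el n) := mul_le_mul' le_rfl h1
  have htwo : (∑' m : ℕ, ((2 : ℝ≥0∞) ^ m)⁻¹) = 2 := by
    simp_rw [ENNReal.inv_pow]
    rw [ENNReal.tsum_geometric, ENNReal.one_sub_inv_two, inv_inv]
  -- the key integral bound
  have Ibound : ∀ n m, ∫⁻ p in (B n ×ˢ (univ : Set X)), φ m p.2 ∂μ' ≤ d n m := by
    intro n m
    have hTmeas : MeasurableSet (B n ×ˢ (univ : Set X)) :=
      (hBopen n).measurableSet.prod .univ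
    set S : Set (G × (G × X)) :=
      {q : G × (G × X) | (q.1⁻¹ * q.2.1, q.2.2) ∈ C m} ∩
        ((univ : Set G) ×ˢ (B n ×ˢ (univ : Set X))) with hSdef
    have hSmeas : MeasurableSet S := by
      refine MeasurableSet.inter ?_ (MeasurableSet.univ.prod hTmeas)
      exact ((measurable_fst.inv.mul measurable_snd.fst).prodMk measurable_snd.snd) (hCmeas m)
    have step1 : ∫⁻ p in (B n ×ˢ (univ : Set X)), φ m p.2 ∂μ' = (lamG.prod μ') S := by
      rw [Measure.prod_apply_symm hSmeas, ← lintegral_indicator hTmeas]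
      congr 1
      funext p
      by_cases hp : p ∈ B n ×ˢ (univ : Set X)
      · rw [Set.indicator_of_mem hp]
        have hset : ((fun g => (g, p)) ⁻¹' S)
            = (fun g => p.1⁻¹ * g) ⁻¹' ((fun v => (v, p.2)) ⁻¹' D m) := by
          ext g
          simp only [hSdef, Set.mem_preimage, Set.mem_inter_iff, Set.mem_setOf_eq,
            Set.mem_prod, Set.mem_univ, true_and, and_true, hp, hDdef]
          rw [mul_inv_rev, inv_inv]
        rw [hset, measure_preimage_mul]
      · rw [Set.indicator_of_notMem hp]
        have hempty : ((fun g => (g, p)) ⁻¹' S) = ∅ := by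
          ext g
          simp only [hSdef, Set.mem_preimage, Set.mem_inter_iff, Set.mem_setOf_eq,
            Set.mem_prod, Set.mem_univ, true_and, Set.mem_empty_iff_false, iff_false]
          exact fun h => hp h.2
        rw [hempty, measure_empty]
    have step2 : (lamG.prod μ') S = ∫⁻ g, μ' (Prod.mk g ⁻¹' S) ∂lamG :=
      Measure.prod_apply hSmeas
    have step3 : ∀ g : G, μ' (Prod.mk g ⁻¹' S)
        ≤ (toMeasurable lamG (B n * (B m)⁻¹)).indicator (fun _ => μ' (C m)) g := by
      intro g
      by_cases hg : g ∈ toMeasurable lamG (B n * (B m)⁻¹)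
      · rw [Set.indicator_of_mem hg]
        have hsub : Prod.mk g ⁻¹' S ⊆ (fun p : G × X => (g⁻¹ * p.1, p.2)) ⁻¹' C m :=
          fun p hp => hp.1
        calc μ' (Prod.mk g ⁻¹' S) ≤ μ' ((fun p : G × X => (g⁻¹ * p.1, p.2)) ⁻¹' C m) :=
              measure_mono hsub
          _ = μ' (C m) := (hinv g⁻¹).measure_preimage (hCmeas m).nullMeasurableSet
      · rw [Set.indicator_of_notMem hg]
        have hempty : Prod.mk g ⁻¹' S = ∅ := by
          ext p
          simp only [hSdef, Set.mem_preimage, Set.mem_inter_iff, Set.mem_setOf_eq,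
            Set.mem_prod, Set.mem_univ, true_and, Set.mem_empty_iff_false, iff_false]
          rintro ⟨hpC, hp1, -⟩
          apply hg
          apply subset_toMeasurable
          rw [Set.mem_mul]
          refine ⟨p.1, hp1, p.1⁻¹ * g, ?_, ?_⟩
          · rw [Set.mem_inv, mul_inv_rev, inv_inv]
            exact hpC.2.1
          · rw [mul_inv_cancel_left]
        rw [hempty, measure_empty]
    calc ∫⁻ p in (B n ×ˢ (univ : Set X)), φ m p.2 ∂μ'
        = ∫⁻ g, μ' (Prod.mk g ⁻¹' S) ∂lamG := by rw [step1, step2]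
      _ ≤ ∫⁻ g, (toMeasurable lamG (B n * (B m)⁻¹)).indicator (fun _ => μ' (C m)) g ∂lamG :=
          lintegral_mono step3
      _ = μ' (C m) * lamG (toMeasurable lamG (B n * (B m)⁻¹)) :=
          lintegral_indicator_const (measurableSet_toMeasurable _ _) _
      _ = d n m := by rw [measure_toMeasurable]
  -- the weight function Ψ
  set Ψ : X → ℝ≥0∞ := fun x => ∑' m, b m * min (φ m x) 1 with hΨdef
  have hΨmeas : Measurable Ψ :=
    Measurable.ennreal_tsum fun m => (measurable_const.mul ((hφmeas m).min measurable_const))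
  have hΨle : ∀ x, Ψ x ≤ 2 := by
    intro x
    calc Ψ x ≤ ∑' m : ℕ, ((2 : ℝ≥0∞) ^ m)⁻¹ :=
          ENNReal.tsum_le_tsum fun m => by
            calc b m * min (φ m x) 1 ≤ ((2 : ℝ≥0∞) ^ m)⁻¹ * 1 :=
                  mul_le_mul' (hb_le m) (min_le_right _ _)
              _ = ((2 : ℝ≥0∞) ^ m)⁻¹ := mul_one _
      _ = 2 := htwo
  have hΨtop : ∀ x, Ψ x ≠ ∞ := fun x =>
    (lt_of_le_of_lt (hΨle x) (by norm_num)).ne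
  have hΨpos : ∀ x, Ψ x ≠ 0 := by
    intro x
    obtain ⟨m, hm⟩ : ∃ m, 0 < φ m x := by
      by_contra h
      push_neg at h
      have hzero : ∀ m, φ m x = 0 := fun m => le_antisymm (h m) zero_le
      have hmono : Monotone fun m => (fun v => (v, x)) ⁻¹' D m := by
        intro a c hac v hv
        exact Set.preimage_mono (Set.preimage_mono (hCmono hac)) hv
      have hcover : ⋃ m, (fun v => (v, x)) ⁻¹' D m = univ := by
        apply Set.eq_univ_of_forall
        intro v
        obtain ⟨n, hn⟩ := hCuniv (v⁻¹, x)
        exact Set.mem_iUnion.2 ⟨n, hn⟩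
      have hpos : 0 < lamG (⋃ m, (fun v => (v, x)) ⁻¹' D m) := by
        rw [hcover]
        exact isOpen_univ.measure_pos lamG univ_nonempty
      rw [(hmono.directed_le).measure_iUnion] at hpos
      simp only [hφdef] at hzero
      simp [hzero] at hpos
    have hterm : 0 < b m * min (φ m x) 1 := by
      apply ENNReal.mul_pos (hb_pos m).ne'
      exact (lt_min hm one_pos).ne'
    intro hx
    have hle : b m * min (φ m x) 1 ≤ Ψ x :=
      ENNReal.le_tsum (f := fun m => b m * min (φ m x) 1) m
    rw [hx] at hle
    exact hterm.ne' (le_antisymm hle zero_le)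
  -- the modified measure ϑ
  set ϑ : Measure (G × X) := μ'.withDensity (fun p => Ψ p.2) with hϑdef
  have hϑfin : ∀ n, ϑ (B n ×ˢ (univ : Set X)) < ∞ := by
    intro n
    have hTmeas : MeasurableSet (B n ×ˢ (univ : Set X)) :=
      (hBopen n).measurableSet.prod .univ
    rw [hϑdef, withDensity_apply _ hTmeas]
    calc ∫⁻ p in (B n ×ˢ (univ : Set X)), Ψ p.2 ∂μ'
        = ∑' m, ∫⁻ p in (B n ×ˢ (univ : Set X)), b m * min (φ m p.2) 1 ∂μ' := by
          rw [hΨdef]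
          exact lintegral_tsum fun m =>
            ((measurable_const.mul (((hφmeas m).comp measurable_snd).min
              measurable_const))).aemeasurable
      _ = ∑' m, b m * ∫⁻ p in (B n ×ˢ (univ : Set X)), min (φ m p.2) 1 ∂μ' := by
          congr 1
          funext m
          exact lintegral_const_mul _ (((hφmeas m).comp measurable_snd).min measurable_const)
      _ ≤ ∑' m, b m * d n m := by
          apply ENNReal.tsum_le_tsum
          intro m
          apply mul_le_mul' le_rfl
          calc ∫⁻ p in (B n ×ˢ (univ : Set X)), min (φ m p.2) 1 ∂μ'
              ≤ ∫⁻ p in (B n ×ˢ (univ : Set X)), φ m p.2 ∂μ' :=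
                lintegral_mono fun p => min_le_left _ _
            _ ≤ d n m := Ibound n m
      _ ≤ ∑' m : ℕ, ((2 : ℝ≥0∞) ^ m)⁻¹ * (1 + el n) := ENNReal.tsum_le_tsum (hbd n)
      _ = (∑' m : ℕ, ((2 : ℝ≥0∞) ^ m)⁻¹) * (1 + el n) := ENNReal.tsum_mul_right
      _ = 2 * (1 + el n) := by rw [htwo]
      _ < ∞ := by
          apply ENNReal.mul_lt_top (by norm_num)
          exact ENNReal.add_lt_top.2 ⟨ENNReal.one_lt_top, hel_fin n⟩
  have hϑinv : ∀ k : G, MeasurePreserving (fun p : G × X => (k * p.1, p.2)) ϑ ϑ := by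
    intro k
    refine ⟨(hinv k).measurable, ?_⟩
    ext A hA
    rw [Measure.map_apply (hinv k).measurable hA, hϑdef,
      withDensity_apply _ ((hinv k).measurable hA), withDensity_apply _ hA,
      ← lintegral_indicator ((hinv k).measurable hA), ← lintegral_indicator hA]
    have hpt : ∀ p : G × X,
        ((fun p : G × X => (k * p.1, p.2)) ⁻¹' A).indicator (fun p => Ψ p.2) p
          = A.indicator (fun p => Ψ p.2) ((k * p.1, p.2)) := by
      intro p
      by_cases h : (k * p.1, p.2) ∈ A
      · rw [Set.indicator_of_mem h, Set.indicator_of_mem (by exact h)]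
      · rw [Set.indicator_of_notMem h, Set.indicator_of_notMem (by exact h)]
    simp_rw [hpt]
    exact (hinv k).lintegral_comp ((hΨmeas.comp measurable_snd).indicator hA)
  haveI hϑsf : SigmaFinite ϑ := by
    refine ⟨⟨⟨fun n => B n ×ˢ (univ : Set X), fun _ => trivial, fun n => hϑfin n, ?_⟩⟩⟩
    apply Set.eq_univ_of_forall
    intro p
    obtain ⟨n, hn⟩ := hBuniv p.1
    exact Set.mem_iUnion.2 ⟨n, hn, trivial⟩
  -- a fixed open set of positive finite Haar measure
  obtain ⟨Kv, hKvc, hKv1⟩ := exists_compact_mem_nhds (1 : G)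
  set V : Set G := interior Kv with hVdef
  have hVopen : IsOpen V := isOpen_interior
  have hVne : V.Nonempty := ⟨1, mem_interior_iff_mem_nhds.mpr hKv1⟩
  have hVpos : 0 < lamG V := hVopen.measure_pos lamG hVne
  have hVfin : lamG V < ∞ :=
    lt_of_le_of_lt (measure_mono interior_subset) hKvc.measure_lt_top
  -- the key rectangle identity for ϑ
  have key : ∀ t : Set X, MeasurableSet t → ∀ s : Set G, MeasurableSet s →
      ϑ (s ×ˢ t) = lamG s * ((lamG V)⁻¹ * ϑ (V ×ˢ t)) := by
    intro t ht
    set κ : Measure G := Measure.map Prod.fst (ϑ.restrict (Prod.snd ⁻¹' t)) with hκdef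
    have hκapp : ∀ s : Set G, MeasurableSet s → κ s = ϑ (s ×ˢ t) := by
      intro s hs
      rw [hκdef, Measure.map_apply measurable_fst hs,
        Measure.restrict_apply (measurable_fst hs)]
      rw [← Set.prod_eq]
    haveI hκinv : κ.IsMulLeftInvariant := by
      constructor
      intro k
      ext s hs
      rw [Measure.map_apply (measurable_const_mul k) hs,
        hκapp _ ((measurable_const_mul k) hs), hκapp _ hs]
      have hpre : ((fun h => k * h) ⁻¹' s) ×ˢ t
          = (fun p : G × X => (k * p.1, p.2)) ⁻¹' (s ×ˢ t) := by
        ext p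
        simp [Set.mem_prod]
      rw [hpre]
      exact (hϑinv k).measure_preimage (hs.prod ht).nullMeasurableSet
    haveI hκfc : IsFiniteMeasureOnCompacts κ := by
      constructor
      intro K hK
      obtain ⟨n, hn⟩ := L.exists_superset_of_isCompact hK
      calc κ K ≤ κ (B n) := measure_mono (hn.trans (hLB n))
        _ = ϑ (B n ×ˢ t) := hκapp _ (hBopen n).measurableSet
        _ ≤ ϑ (B n ×ˢ (univ : Set X)) := measure_mono (Set.prod_mono_right (subset_univ t))
        _ < ∞ := hϑfin n
    have huniq := κ.isMulLeftInvariant_eq_smul lamG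
    have happ : ∀ s : Set G, κ s = (κ.haarScalarFactor lamG : ℝ≥0∞) * lamG s := by
      intro s
      conv_lhs => rw [huniq]
      rw [Measure.smul_apply, ENNReal.smul_def, smul_eq_mul]
    intro s hs
    have h1 : ϑ (s ×ˢ t) = (κ.haarScalarFactor lamG : ℝ≥0∞) * lamG s := by
      rw [← hκapp s hs]; exact happ s
    have h2 : ϑ (V ×ˢ t) = (κ.haarScalarFactor lamG : ℝ≥0∞) * lamG V := by
      rw [← hκapp V hVopen.measurableSet]; exact happ V
    rw [h1, h2]
    have hcancel : (lamG V)⁻¹ * ((κ.haarScalarFactor lamG : ℝ≥0∞) * lamG V)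
        = (κ.haarScalarFactor lamG : ℝ≥0∞) := by
      rw [mul_comm ((κ.haarScalarFactor lamG : ℝ≥0∞)) (lamG V), ← mul_assoc,
        ENNReal.inv_mul_cancel hVpos.ne' hVfin.ne, one_mul]
    rw [hcancel, mul_comm]
  -- the base measure ν₀ on X
  set ν₀ : Measure X := (lamG V)⁻¹ • Measure.map Prod.snd (ϑ.restrict (Prod.fst ⁻¹' V))
    with hν₀def
  have hν₀app : ∀ t : Set X, MeasurableSet t → ν₀ t = (lamG V)⁻¹ * ϑ (V ×ˢ t) := by
    intro t ht
    rw [hν₀def, Measure.smul_apply, smul_eq_mul,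
      Measure.map_apply measurable_snd ht, Measure.restrict_apply (measurable_snd ht)]
    congr 2
    rw [Set.prod_eq, Set.inter_comm]
  haveI hν₀fin : IsFiniteMeasure ν₀ := by
    constructor
    rw [hν₀app univ MeasurableSet.univ]
    obtain ⟨n, hn⟩ := L.exists_superset_of_isCompact hKvc
    calc (lamG V)⁻¹ * ϑ (V ×ˢ (univ : Set X))
        ≤ (lamG V)⁻¹ * ϑ (B n ×ˢ (univ : Set X)) := by
          apply mul_le_mul' le_rfl
          apply measure_mono
          apply Set.prod_mono_left
          exact (interior_subset.trans hn).trans (hLB n)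
      _ < ∞ := ENNReal.mul_lt_top (ENNReal.inv_lt_top.2 hVpos) (hϑfin n)
  have hprod : lamG.prod ν₀ = ϑ :=
    Measure.prod_eq fun s t hs ht => by rw [key t ht s hs, hν₀app t ht]
  -- recovering μ' from ϑ
  have hμ' : ϑ.withDensity (fun p => (Ψ p.2)⁻¹) = μ' := by
    rw [hϑdef, ← withDensity_mul (μ := μ') (f := fun p : G × X => Ψ p.2)
      (g := fun p : G × X => (Ψ p.2)⁻¹) (hΨmeas.comp measurable_snd)
      (hΨmeas.comp measurable_snd).inv]
    have hone : ((fun p : G × X => Ψ p.2) * fun p => (Ψ p.2)⁻¹) = 1 := by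
      funext p
      simp only [Pi.mul_apply, Pi.one_apply]
      exact ENNReal.mul_inv_cancel (hΨpos p.2) (hΨtop p.2)
    rw [hone, withDensity_one]
  -- the final measure ν
  set ν : Measure X := ν₀.withDensity (fun x => (Ψ x)⁻¹) with hνdef
  haveI hνsf : SigmaFinite ν := by
    refine ⟨⟨⟨fun j => {x : X | (Ψ x)⁻¹ ≤ j}, fun _ => trivial, ?_, ?_⟩⟩⟩
    · intro j
      rw [hνdef, withDensity_apply _ (measurableSet_le (f := fun x => (Ψ x)⁻¹) hΨmeas.inv measurable_const)]
      calc ∫⁻ x in {x : X | (Ψ x)⁻¹ ≤ j}, (Ψ x)⁻¹ ∂ν₀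
          ≤ ∫⁻ _ in {x : X | (Ψ x)⁻¹ ≤ j}, (j : ℝ≥0∞) ∂ν₀ :=
            setLIntegral_mono measurable_const fun x hx => hx
        _ = j * ν₀ {x : X | (Ψ x)⁻¹ ≤ j} := setLIntegral_const _ _
        _ < ∞ := ENNReal.mul_lt_top (ENNReal.natCast_lt_top j) (measure_lt_top _ _)
    · apply Set.eq_univ_of_forall
      intro x
      have : (Ψ x)⁻¹ ≠ ∞ := ENNReal.inv_ne_top.2 (hΨpos x)
      obtain ⟨j, hj⟩ := ENNReal.exists_nat_gt this
      exact Set.mem_iUnion.2 ⟨j, hj.le⟩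
  -- conclusion
  refine ⟨ν, Measure.prod_eq fun s t hs ht => ?_⟩
  have hminv : Measurable (fun p : G × X => (Ψ p.2)⁻¹) := (hΨmeas.comp measurable_snd).inv
  rw [← hμ', withDensity_apply _ (hs.prod ht), ← hprod, ← Measure.prod_restrict,
    lintegral_prod _ hminv.aemeasurable]
  have hfun : (fun g : G => ∫⁻ x, ((fun p : G × X => (Ψ p.2)⁻¹) (g, x)) ∂ν₀.restrict t)
      = fun _ : G => ∫⁻ x, (Ψ x)⁻¹ ∂ν₀.restrict t := rfl
  rw [hfun, lintegral_const, Measure.restrict_apply_univ, hνdef, withDensity_apply _ ht,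
    mul_comm]

/-- Given a free Borel action of a locally compact second countable group
`G` on a Polish space `Ω` with a Borel fundamental domain `F` such that
`i_G : G × F → Ω, (g,x) ↦ g·x` is a Borel isomorphism, and a `G`-invariant σ-finite Borel
measure `μ` on `Ω`, there is a measure `ν` on `F` with `(i_G)_*(λ_G ⊗ ν) = μ`. -/
theorem exists_measure_on_fundamentalDomain_map_prod_haar_eq
    {G Ω : Type*} [Group G] [TopologicalSpace G] [IsTopologicalGroup G]
    [LocallyCompactSpace G] [SecondCountableTopology G] [MeasurableSpace G] [BorelSpace G]
    (lamG : Measure G) [lamG.IsHaarMeasure]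
    [TopologicalSpace Ω] [PolishSpace Ω] [MeasurableSpace Ω] [BorelSpace Ω]
    (act : G → Ω → Ω)
    (act_one : ∀ ω, act 1 ω = ω)
    (act_mul : ∀ g g' ω, act (g * g') ω = act g (act g' ω))
    (hmeas : Measurable fun p : G × Ω => act p.1 p.2)
    (hfree : ∀ g ω, act g ω = ω → g = 1)
    (F : Set Ω) (hF : MeasurableSet F)
    (hfund : ∀ ω : Ω, ∃! g : G, act g ω ∈ F)
    (e : G × F ≃ᵐ Ω) (he : ∀ (g : G) (x : F), e (g, x) = act g (x : Ω))
    (μ : Measure Ω) [SigmaFinite μ]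
    (hinv : ∀ g : G, MeasurePreserving (act g) μ μ) :
    ∃ ν : Measure F, Measure.map e (lamG.prod ν) = μ := by
  set μ' : Measure (G × F) := Measure.map e.symm μ with hμ'def
  haveI : SigmaFinite μ' := e.symm.sigmaFinite_map
  have hes : MeasurePreserving e.symm μ μ' := ⟨e.symm.measurable, rfl⟩
  have hmap : Measure.map e μ' = μ := by
    rw [hμ'def, Measure.map_map e.measurable e.symm.measurable]
    have : (e : G × F → Ω) ∘ (e.symm : Ω → G × F) = id := by
      funext ω
      exact e.apply_symm_apply ω
    rw [this, Measure.map_id]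
  have he' : MeasurePreserving e μ' μ := ⟨e.measurable, hmap⟩
  have hinv' : ∀ k : G, MeasurePreserving (fun p : G × F => (k * p.1, p.2)) μ' μ' := by
    intro k
    have hfun : (fun p : G × F => (k * p.1, p.2))
        = (e.symm : Ω → G × F) ∘ (act k) ∘ (e : G × F → Ω) := by
      funext p
      have h1 : e (k * p.1, p.2) = act k (e p) := by
        have h2 : e p = act p.1 (p.2 : Ω) := by
          rw [← he p.1 p.2]
        rw [he (k * p.1) p.2, act_mul, ← h2]
      have := congrArg e.symm h1
      rwa [e.symm_apply_apply] at this
    rw [hfun]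
    exact hes.comp ((hinv k).comp he')
  obtain ⟨ν, hν⟩ := exists_prod_eq_of_measurePreserving_mulLeft lamG μ' hinv'
  exact ⟨ν, by rw [hν, hmap]⟩
end

section
/- Let (H,d) be a metric space, (G,λ) a measure space, K ⊆ G a measurable set, and let ε > 0, s > 0, N ∈ ℕ. Let ξ and ξ_n (n ∈ ℕ) be maps from H to L¹(G,λ) such that ξ_n(h) → ξ(h) in L¹-norm for every h ∈ H, and suppose that for every n the set {h ∈ H : ∫_K ξ_n(h) dλ ≥ ε/2} can be covered by at most N open balls of radius s/2 in H. Then the set {h ∈ H : ∫_K ξ(h) dλ ≥ ε} can be covered by at most N open balls of radius s in H. -/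
open MeasureTheory

/-- If each superlevel set `{h : ∫_K ξ_n(h) ≥ ε/2}` can be covered by at
most `N` balls of radius `s/2`, and `ξ_n(h) → ξ(h)` in `L¹` for every `h`, then
`{h : ∫_K ξ(h) ≥ ε}` can be covered by at most `N` balls of radius `s`. -/
theorem superlevel_covered_of_L1_limit
    {H G : Type*} [MetricSpace H] [MeasurableSpace G]
    (lam : Measure G) (K : Set G) (hK : MeasurableSet K)
    (ε s : ℝ) (hε : 0 < ε) (hs : 0 < s) (N : ℕ)
    (ξ : H → Lp ℝ 1 lam) (ξn : ℕ → H → Lp ℝ 1 lam)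
    (hconv : ∀ h : H, Filter.Tendsto (fun n => ξn n h) Filter.atTop (nhds (ξ h)))
    (hcov : ∀ n : ℕ, ∃ F : Finset H, F.card ≤ N ∧
      {h : H | ε / 2 ≤ ∫ x in K, (ξn n h : G → ℝ) x ∂lam} ⊆ ⋃ c ∈ F, Metric.ball c (s / 2)) :
    ∃ F : Finset H, F.card ≤ N ∧
      {h : H | ε ≤ ∫ x in K, (ξ h : G → ℝ) x ∂lam} ⊆ ⋃ c ∈ F, Metric.ball c s := by
  classical
  set S : Set H := {h : H | ε ≤ ∫ x in K, (ξ h : G → ℝ) x ∂lam} with hS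
  -- For each h ∈ S, eventually ε/2 ≤ ∫_K ξn n h
  have hint : ∀ h ∈ S, ∀ᶠ n in Filter.atTop, ε / 2 ≤ ∫ x in K, (ξn n h : G → ℝ) x ∂lam := by
    intro h hh
    have hcont : Filter.Tendsto (fun n => ∫ x in K, (ξn n h : G → ℝ) x ∂lam)
        Filter.atTop (nhds (∫ x in K, (ξ h : G → ℝ) x ∂lam)) :=
      ((continuous_setIntegral K (μ := lam) (E := ℝ)).continuousAt.tendsto.comp (hconv h))
    exact hcont.eventually (eventually_ge_nhds (by simpa using lt_of_lt_of_le (by linarith) hh))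
  -- property: F is a separated subset of S
  set P : Finset H → Prop :=
    fun F => (↑F : Set H) ⊆ S ∧ ∀ a ∈ F, ∀ b ∈ F, a ≠ b → s ≤ dist a b with hP
  -- any separated subset of S has card ≤ N
  have hcard : ∀ F : Finset H, P F → F.card ≤ N := by
    intro F ⟨hFS, hFsep⟩
    by_contra hlt
    push_neg at hlt
    -- find common n
    have : ∀ᶠ n in Filter.atTop, ∀ h ∈ F, ε / 2 ≤ ∫ x in K, (ξn n h : G → ℝ) x ∂lam := by
      rw [Filter.eventually_all_finset]
      intro h hh
      exact hint h (hFS hh)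
    obtain ⟨n, hn⟩ := this.exists
    obtain ⟨Fn, hFnN, hFncov⟩ := hcov n
    -- map each point of F to a ball center in Fn
    have hmaps : ∀ h ∈ F, ∃ c ∈ Fn, h ∈ Metric.ball c (s / 2) := by
      intro h hh
      have := hFncov (hn h hh)
      simpa using this
    choose f hf hfball using hmaps
    have : ∃ a ∈ F.attach, ∃ b ∈ F.attach, a ≠ b ∧ f a.1 a.2 = f b.1 b.2 := by
      apply Finset.exists_ne_map_eq_of_card_lt_of_maps_to
      · simpa using lt_of_le_of_lt hFnN (by simpa using hlt)
      · intro a _; exact hf a.1 a.2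
    obtain ⟨a, _, b, _, hab, hfab⟩ := this
    have hne : (a : H) ≠ (b : H) := fun h => hab (Subtype.ext h)
    have h1 := hfball a.1 a.2
    have h2 := hfball b.1 b.2
    rw [hfab] at h1
    have : dist (a : H) (b : H) < s := by
      calc dist (a : H) (b : H) ≤ dist (a : H) (f b.1 b.2) + dist (f b.1 b.2) (b : H) :=
            dist_triangle _ _ _
        _ < s / 2 + s / 2 := by
            have h1' : dist (a : H) (f b.1 b.2) < s / 2 := by
              simpa [Metric.mem_ball, dist_comm] using h1
            have h2' : dist (f b.1 b.2) (b : H) < s / 2 := by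
              simpa [Metric.mem_ball, dist_comm] using h2
            linarith
        _ = s := by ring
    exact absurd (hFsep a a.2 b b.2 hne) (not_le.mpr this)
  -- take a maximal separated subset
  have hex : ∃ k, k ≤ N ∧ ∃ F : Finset H, P F ∧ F.card = k := by
    exact ⟨0, Nat.zero_le _, ∅, ⟨by simp, by simp⟩, rfl⟩
  -- maximal cardinality
  let Q : ℕ → Prop := fun k => ∃ F : Finset H, P F ∧ F.card = k
  have hQ0 : Q 0 := ⟨∅, ⟨by simp, by simp⟩, rfl⟩
  set M := Nat.findGreatest Q N with hM
  have hQM : Q M := Nat.findGreatest_spec (Nat.zero_le _) hQ0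
  obtain ⟨F, hPF, hFcard⟩ := hQM
  refine ⟨F, hFcard ▸ Nat.findGreatest_le N, ?_⟩
  intro h hh
  by_contra hout
  simp only [Set.mem_iUnion, Metric.mem_ball, not_exists, not_lt] at hout
  -- then insert h F is a larger separated set
  have hhF : h ∉ F := by
    intro hmem
    have := hout h hmem
    simp at this
    linarith
  have hP' : P (insert h F) := by
    constructor
    · intro x hx
      simp only [Finset.coe_insert, Set.mem_insert_iff] at hx
      rcases hx with rfl | hx
      · exact hh
      · exact hPF.1 hx
    · intro a ha b hb hab
      simp only [Finset.mem_insert] at ha hb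
      rcases ha with rfl | ha <;> rcases hb with rfl | hb
      · exact absurd rfl hab
      · simpa [dist_comm] using hout b hb
      · simpa [dist_comm] using hout a ha
      · exact hPF.2 a ha b hb hab
  have hle : (insert h F).card ≤ N := hcard _ hP'
  have hcardins : (insert h F).card = F.card + 1 := Finset.card_insert_of_notMem hhF
  have : M + 1 ≤ M := by
    have hQ1 : Q (M + 1) := ⟨insert h F, hP', by omega⟩
    have := Nat.le_findGreatest (by omega : M + 1 ≤ N) hQ1
    omega
  omega
end

section
/- Let G be a unimodular locally compact second countable compactly generated group with compact symmetric generating set S_G and Haar measure λ_G, let p ≥ 1, and let A ⊆ G be a measurable set of finite measure. Then the supremum of ‖f‖_p/‖∇_G^r f‖_p over all nonzero f ∈ L^p(G,λ_G) supported in A equals the supremum of ‖f‖_p/‖∇_G^r f‖_p over all nonzero f ∈ L^∞(G,λ_G) supported in A (both suprema taken in [0,∞]). -/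
open MeasureTheory ENNReal

noncomputable section

/-- Word length of `g` with respect to a generating set `S`. -/
def wordLength {G : Type*} [Group G] (S : Set G) (g : G) : ℕ :=
  sInf {n : ℕ | ∃ l : List G, (∀ x ∈ l, x ∈ S) ∧ l.length = n ∧ l.prod = g}

/-- Open ball for a distance function. -/
def mball {X : Type*} (d : X → X → ℝ) (x : X) (r : ℝ) : Set X := {y | d x y < r}

/-- `A` can be covered by at most `N` balls of radius `s`. -/
def CoveredByBalls {X : Type*} (d : X → X → ℝ) (A : Set X) (N : ℕ) (s : ℝ) : Prop :=
  ∃ F : Finset X, F.card ≤ N ∧ A ⊆ ⋃ c ∈ F, mball d c s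

/-- A proper left-invariant metric on a topological group. -/
structure IsPLIMetric {G : Type*} [Group G] [TopologicalSpace G] (d : G → G → ℝ) : Prop where
  nonneg : ∀ x y, 0 ≤ d x y
  eq_zero_iff : ∀ x y, d x y = 0 ↔ x = y
  symm : ∀ x y, d x y = d y x
  triangle : ∀ x y z, d x z ≤ d x y + d y z
  left_invariant : ∀ g x y, d (g * x) (g * y) = d x y
  proper : ∀ (x : G) (r : ℝ), IsCompact {y | d x y ≤ r}

/-- A proper left-invariant metric quasi-isometric to the word metric of `S`. -/
structure IsGoodMetric {G : Type*} [Group G] [TopologicalSpace G] (S : Set G)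
    (d : G → G → ℝ) extends IsPLIMetric d : Prop where
  quasiIsometric : ∃ a > (0:ℝ), ∃ b > (0:ℝ), ∀ x y : G,
    d x y ≤ a * (wordLength S (x⁻¹ * y) : ℝ) + b ∧
    (wordLength S (x⁻¹ * y) : ℝ) ≤ a * d x y + b

/-- A regular embedding between spaces with distance functions. -/
def IsRegularEmbedding {H G : Type*} (dH : H → H → ℝ) (dG : G → G → ℝ) (f : H → G) : Prop :=
  ∃ L > (0:ℝ), ∃ r > (0:ℝ), ∃ s > (0:ℝ), ∃ N : ℕ,
    (∀ x x' : H, dG (f x) (f x') ≤ L * dH x x' + L) ∧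
    ∀ g : G, CoveredByBalls dH (f ⁻¹' mball dG g r) N s

/-- Amenability: existence of a left-invariant mean on `L^∞`. -/
def HasInvariantMean {G : Type*} [Group G] [MeasurableSpace G] (lam : Measure G) : Prop :=
  ∃ m : Lp ℝ ⊤ lam →ₗ[ℝ] ℝ,
    (∀ f : Lp ℝ ⊤ lam, 0 ≤ᵐ[lam] (f : G → ℝ) → 0 ≤ m f) ∧
    m ((memLp_top_const (1 : ℝ)).toLp fun _ => (1 : ℝ)) = 1 ∧
    (∀ (g : G) (f f' : Lp ℝ ⊤ lam), (∀ᵐ x ∂lam, f' x = f (g * x)) → m f' = m f)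

/-- A measure subgroup coupling from `H` to `G`. -/
structure MSC (H G Ω : Type*) [Group H] [MeasurableSpace H] [Group G] [MeasurableSpace G]
    (lamH : Measure H) (lamG : Measure G) where
  [mΩ : MeasurableSpace Ω]
  stdBorel : StandardBorelSpace Ω
  μ : Measure Ω
  actH : H → Ω → Ω
  actG : G → Ω → Ω
  actH_one : ∀ ω, actH 1 ω = ω
  actH_mul : ∀ h h' ω, actH (h * h') ω = actH h (actH h' ω)
  actG_one : ∀ ω, actG 1 ω = ω
  actG_mul : ∀ g g' ω, actG (g * g') ω = actG g (actG g' ω)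
  actions_commute : ∀ h g ω, actH h (actG g ω) = actG g (actH h ω)
  freeH : ∀ h ω, actH h ω = ω → h = 1
  freeG : ∀ g ω, actG g ω = ω → g = 1
  measurable_actH : Measurable fun p : H × Ω => actH p.1 p.2
  measurable_actG : Measurable fun p : G × Ω => actG p.1 p.2
  sigmaFinite_μ : SigmaFinite μ
  measurePreserving_actH : ∀ h, MeasurePreserving (actH h) μ μ
  measurePreserving_actG : ∀ g, MeasurePreserving (actG g) μ μ
  FH : Set Ω
  FG : Set Ω
  meas_FH : MeasurableSet FH
  meas_FG : MeasurableSet FG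
  fund_FH : ∀ ω, ∃! h : H, actH h ω ∈ FH
  fund_FG : ∀ ω, ∃! g : G, actG g ω ∈ FG
  νH : Measure Ω
  νG : Measure Ω
  νH_null : νH FHᶜ = 0
  νG_null : νG FGᶜ = 0
  sigmaFinite_νH : SigmaFinite νH
  finite_νG : IsFiniteMeasure νG
  iso_G : Measure.map (fun p : G × Ω => actG p.1 p.2) (lamG.prod νG) = μ
  iso_H : Measure.map (fun p : H × Ω => actH p.1 p.2) (lamH.prod νH) = μ
  indActH : H → Ω → Ω
  cocG : H → Ω → G
  indActH_mem : ∀ (h : H), ∀ x ∈ FG, indActH h x ∈ FG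
  cocycle_spec : ∀ (h : H), ∀ x ∈ FG, actH h x = actG (cocG h x) (indActH h x)

namespace MSC

variable {H G Ω : Type*} [Group H] [MeasurableSpace H] [Group G] [MeasurableSpace G]
  {lamH : Measure H} {lamG : Measure G}

/-- The coupling is `L^∞`. -/
def IsLinfty (c : MSC H G Ω lamH lamG) (SH : Set H) (SG : Set G) : Prop :=
  ∃ C : ℝ, ∀ h ∈ SH, ∀ᵐ x ∂c.νG, (wordLength SG (c.cocG h x) : ℝ) ≤ C

/-- The coupling is `L^p`. -/
def IsLp (c : MSC H G Ω lamH lamG) (SH : Set H) (SG : Set G) (p : ℝ) : Prop :=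
  ∃ C : ℝ≥0∞, C ≠ ⊤ ∧ ∀ h ∈ SH,
    eLpNorm (fun x => (wordLength SG (c.cocG h x) : ℝ)) (ENNReal.ofReal p) c.νG ≤ C

/-- The coupling is `φ`-integrable. -/
def IsPhiIntegrable (c : MSC H G Ω lamH lamG) (SH : Set H) (SG : Set G) (φ : ℝ → ℝ) : Prop :=
  ∃ C : ℝ≥0∞, C ≠ ⊤ ∧ ∀ h ∈ SH,
    (∫⁻ x, ENNReal.ofReal (φ (wordLength SG (c.cocG h x) : ℝ)) ∂c.νG) ≤ C

/-- The coupling is coarsely `m`-to-`1` at scale `s`. -/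
def CoarselyMTo1 (c : MSC H G Ω lamH lamG) (dH : H → H → ℝ) (dG : G → G → ℝ)
    (m : ℕ) (s : ℝ) : Prop :=
  ∀ x ∈ c.FG, ∀ g : G,
    CoveredByBalls dH ((fun h : H => c.cocG h⁻¹ x) ⁻¹' mball dG g 3) m s

end MSC

/-- The `L^p` norm of the right gradient. -/
def eLpGradNorm {G : Type*} [Group G] [MeasurableSpace G] (SG : Set G) (lamG : Measure G)
    (p : ℝ) (f : G → ℝ) : ℝ≥0∞ :=
  ⨆ s ∈ SG, eLpNorm (fun g => f g - f (g * s)) (ENNReal.ofReal p) lamG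

/-- The `L^p` isoperimetric quotient of a set `A`. -/
def Jp {G : Type*} [Group G] [MeasurableSpace G] (SG : Set G) (lamG : Measure G)
    (p : ℝ) (A : Set G) : ℝ≥0∞ :=
  ⨆ (f : G → ℝ) (_ : MemLp f (ENNReal.ofReal p) lamG) (_ : Function.support f ⊆ A)
    (_ : eLpNorm f (ENNReal.ofReal p) lamG ≠ 0),
    eLpNorm f (ENNReal.ofReal p) lamG / eLpGradNorm SG lamG p f

/-- The `L^p` isoperimetric profile. -/
def jp {G : Type*} [Group G] [MeasurableSpace G] (SG : Set G) (lamG : Measure G)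
    (p : ℝ) (v : ℝ) : ℝ≥0∞ :=
  ⨆ (A : Set G) (_ : MeasurableSet A) (_ : lamG A ≤ ENNReal.ofReal v), Jp SG lamG p A

/-- Asymptotic domination `u ≼ v` for nondecreasing `[0,∞]`-valued profiles. -/
def AsympLE (u v : ℝ → ℝ≥0∞) : Prop :=
  ∃ C > (0:ℝ), ∃ C' > (0:ℝ), ∃ t₀ : ℝ, ∀ t ≥ t₀, u t ≤ ENNReal.ofReal C' * v (C * t)

/-- Extension of `φ : (0,∞) → (0,∞)` to `[0,∞]`. -/
def phiE (φ : ℝ → ℝ) (x : ℝ≥0∞) : ℝ≥0∞ :=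
  if x = ⊤ then ⊤ else ENNReal.ofReal (φ x.toReal)

/-- `A` is `h`-thick: a union of balls of radius `h`. -/
def IsThick {X : Type*} (d : X → X → ℝ) (h : ℝ) (A : Set X) : Prop :=
  ∃ C : Set X, A = ⋃ c ∈ C, mball d c h



private def clampN (n : ℕ) (x : ℝ) : ℝ := max (-(n:ℝ)) (min (n:ℝ) x)

private lemma clampN_lipschitz (n : ℕ) : LipschitzWith 1 (clampN n) := by
  have h := (LipschitzWith.id.min_const (n:ℝ)).max_const (-(n:ℝ))
  have e : clampN n = fun x => max (min (id x) (n:ℝ)) (-(n:ℝ)) := by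
    funext x
    show max (-(n:ℝ)) (min (n:ℝ) x) = _
    rw [max_comm, min_comm]
    rfl
  rwa [e]

private lemma abs_clampN (n : ℕ) (x : ℝ) : |clampN n x| = min (n:ℝ) |x| := by
  have hn : (0:ℝ) ≤ n := n.cast_nonneg
  unfold clampN
  rcases le_total 0 x with h | h
  · rw [max_eq_right (le_trans (neg_nonpos.2 hn) (le_min hn h)),
      abs_of_nonneg (le_min hn h), abs_of_nonneg h]
  · rw [min_eq_right (h.trans hn), abs_of_nonpos h,
      abs_of_nonpos (max_le (neg_nonpos.2 hn) h), ← min_neg_neg, neg_neg]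

private lemma clampN_zero (n : ℕ) : clampN n 0 = 0 := by
  have hn : (0:ℝ) ≤ n := n.cast_nonneg
  unfold clampN
  rw [min_eq_right hn, max_eq_right (neg_nonpos.2 hn)]

/-- Over a set `A` of finite measure, the supremum of `‖f‖_p / ‖∇_G^r f‖_p`
over nonzero `f ∈ L^p` supported in `A` equals the supremum over nonzero `f ∈ L^∞`
supported in `A`. -/
theorem isoperimetricQuotient_eq_sup_over_Linfty
    {G : Type*}
    [Group G] [TopologicalSpace G] [IsTopologicalGroup G] [LocallyCompactSpace G]
    [SecondCountableTopology G] [MeasurableSpace G] [BorelSpace G]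
    (lamG : Measure G) [lamG.IsHaarMeasure] [lamG.IsMulRightInvariant]
    (SG : Set G) (hSGcomp : IsCompact SG) (hSGsymm : SG⁻¹ = SG) (hSG1 : (1:G) ∈ SG)
    (hSGgen : Subgroup.closure SG = ⊤)
    (p : ℝ) (hp : 1 ≤ p) (A : Set G) (hA : MeasurableSet A) (hAfin : lamG A ≠ ⊤) :
    (⨆ (f : G → ℝ) (_ : MemLp f (ENNReal.ofReal p) lamG) (_ : Function.support f ⊆ A)
        (_ : eLpNorm f (ENNReal.ofReal p) lamG ≠ 0),
        eLpNorm f (ENNReal.ofReal p) lamG / eLpGradNorm SG lamG p f) =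
      (⨆ (f : G → ℝ) (_ : MemLp f ⊤ lamG) (_ : Function.support f ⊆ A)
        (_ : eLpNorm f (ENNReal.ofReal p) lamG ≠ 0),
        eLpNorm f (ENNReal.ofReal p) lamG / eLpGradNorm SG lamG p f) := by
  set q := ENNReal.ofReal p with hq
  have hp0 : 0 < p := lt_of_lt_of_le one_pos hp
  have hq0 : q ≠ 0 := by
    simp only [hq, ne_eq, ENNReal.ofReal_eq_zero, not_le]
    exact hp0
  have hqt : q ≠ ⊤ := ENNReal.ofReal_ne_top
  have hqr : q.toReal = p := ENNReal.toReal_ofReal hp0.le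
  apply le_antisymm
  · refine iSup_le fun f => iSup_le fun hf => iSup_le fun hsupp => iSup_le fun hne => ?_
    set F : ℕ → G → ℝ := fun n g => clampN n (f g) with hF
    have hmeas : ∀ n, AEStronglyMeasurable (F n) lamG := fun n =>
      (clampN_lipschitz n).continuous.comp_aestronglyMeasurable hf.1
    have hmemtop : ∀ n, MemLp (F n) ⊤ lamG := fun n =>
      memLp_top_of_bound (hmeas n) n (Filter.Eventually.of_forall fun g => by
        rw [Real.norm_eq_abs]
        show |clampN n (f g)| ≤ (n:ℝ)
        rw [abs_clampN]
        exact min_le_left _ _)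
    have hsupp' : ∀ n, Function.support (F n) ⊆ A := fun n =>
      subset_trans (fun g hg => by
        simp only [Function.mem_support] at hg ⊢
        intro h0
        apply hg
        show clampN n (f g) = 0
        rw [h0, clampN_zero]) hsupp
    have hgrad : ∀ n, eLpGradNorm SG lamG p (F n) ≤ eLpGradNorm SG lamG p f := by
      intro n
      refine iSup₂_mono fun s hs => eLpNorm_mono fun g => ?_
      have := (clampN_lipschitz n).dist_le_mul (f g) (f (g * s))
      simpa [Real.dist_eq, Real.norm_eq_abs] using this
    have hptw : ∀ n g, ((‖F n g‖₊ : ℝ≥0∞)) = ENNReal.ofReal (min (n:ℝ) |f g|) := by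
      intro n g
      rw [← enorm_eq_nnnorm, ← ofReal_norm, Real.norm_eq_abs]
      congr 1
      exact abs_clampN n (f g)
    have hsup_norm : (⨆ n, eLpNorm (F n) q lamG) = eLpNorm f q lamG := by
      simp only [eLpNorm_eq_lintegral_rpow_enorm_toReal hq0 hqt, hqr, enorm_eq_nnnorm]
      have hiso : ∀ (u : ℕ → ℝ≥0∞), (⨆ n, u n) ^ (1/p) = ⨆ n, (u n) ^ (1/p) := fun u => by
        have h := (ENNReal.orderIsoRpow (1/p) (by positivity)).map_iSup u
        simp only [ENNReal.orderIsoRpow_apply] at h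
        exact h
      rw [← hiso]
      congr 1
      rw [← lintegral_iSup']
      · refine lintegral_congr fun g => ?_
        simp only [hptw]
        apply le_antisymm
        · refine iSup_le fun n => ?_
          refine ENNReal.rpow_le_rpow ?_ hp0.le
          rw [← enorm_eq_nnnorm, ← ofReal_norm, Real.norm_eq_abs]
          exact ENNReal.ofReal_le_ofReal (min_le_right _ _)
        · refine le_iSup_of_le ⌈|f g|⌉₊ ?_
          rw [min_eq_right (Nat.le_ceil _), ← Real.norm_eq_abs, ofReal_norm, enorm_eq_nnnorm]
      · exact fun n => ((hmeas n).enorm).pow_const p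
      · refine Filter.Eventually.of_forall fun g m n hmn => ?_
        simp only [hptw]
        refine ENNReal.rpow_le_rpow ?_ hp0.le
        exact ENNReal.ofReal_le_ofReal (min_le_min (Nat.cast_le.2 hmn) le_rfl)
    calc eLpNorm f q lamG / eLpGradNorm SG lamG p f
        = (⨆ n, eLpNorm (F n) q lamG) / eLpGradNorm SG lamG p f := by rw [hsup_norm]
      _ = ⨆ n, eLpNorm (F n) q lamG / eLpGradNorm SG lamG p f := ENNReal.iSup_div _ _
      _ ≤ _ := by
          refine iSup_le fun n => ?_
          by_cases hz : eLpNorm (F n) q lamG = 0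
          · simp [hz]
          · refine le_trans (ENNReal.div_le_div le_rfl (hgrad n)) ?_
            exact le_iSup_of_le (F n) (le_iSup_of_le (hmemtop n)
              (le_iSup_of_le (hsupp' n) (le_iSup_of_le hz le_rfl)))
  · refine iSup_le fun f => iSup_le fun hf => iSup_le fun hsupp => iSup_le fun hne => ?_
    have hfp : MemLp f q lamG := hf.mono_exponent_of_measure_support_ne_top
      (fun x hx => Function.notMem_support.1 fun h => hx (hsupp h)) hAfin le_top
    exact le_iSup_of_le f (le_iSup_of_le hfp (le_iSup_of_le hsupp (le_iSup_of_le hne le_rfl)))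


end
end

section
/- Let G be a group with a symmetric generating set S, acting by linear isometries on a normed vector space E, and let φ : (0,∞) → (0,∞) be a function such that φ and t ↦ t/φ(t) are non-decreasing. Then for every nonzero f ∈ E with 0 < sup_{s∈S} ‖f − s·f‖ < ∞ and every g ∈ G, ‖f − g·f‖ ≤ 2·φ(|g|_S · sup_{s∈S} ‖f − s·f‖) · ‖f‖ / φ(‖f‖), where |g|_S is the word length of g with respect to S. -/
open ENNReal

noncomputable section

/-- Sublinear version: for a group acting by linear isometries on a
normed space and `φ` with `φ` and `t ↦ t/φ(t)` non-decreasing on `(0,∞)`,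
`‖f − g·f‖ ≤ 2·φ(|g|_S · sup_{s∈S} ‖f − s·f‖)·‖f‖/φ(‖f‖)` for nonzero `f` whose gradient
supremum is positive and finite. -/
theorem norm_sub_smul_le_sublinear
    {G E : Type*} [Group G] [NormedAddCommGroup E] [NormedSpace ℝ E]
    (S : Set G) (hSsymm : S⁻¹ = S) (hSgen : Subgroup.closure S = ⊤)
    (act : G → E → E)
    (hlin : ∀ g : G, IsLinearMap ℝ (act g))
    (hiso : ∀ (g : G) (v : E), ‖act g v‖ = ‖v‖)
    (hone : ∀ v : E, act 1 v = v)
    (hmul : ∀ (g g' : G) (v : E), act (g * g') v = act g (act g' v))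
    (φ : ℝ → ℝ) (hφpos : ∀ t > (0:ℝ), 0 < φ t) (hφ0 : 0 ≤ φ 0)
    (hφmono : MonotoneOn φ (Set.Ioi 0))
    (hφsub : MonotoneOn (fun t => t / φ t) (Set.Ioi 0))
    (f : E) (hf : f ≠ 0)
    (hpos : 0 < ⨆ s ∈ S, ENNReal.ofReal ‖f - act s f‖)
    (hfin : (⨆ s ∈ S, ENNReal.ofReal ‖f - act s f‖) ≠ ⊤)
    (g : G) :
    ‖f - act g f‖ ≤
      2 * φ ((wordLength S g : ℝ) * (⨆ s ∈ S, ENNReal.ofReal ‖f - act s f‖).toReal) *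
        ‖f‖ / φ ‖f‖ := by
  set D := (⨆ s ∈ S, ENNReal.ofReal ‖f - act s f‖).toReal with hDdef
  have hD0 : 0 < D := ENNReal.toReal_pos hpos.ne' hfin
  have hfnorm : 0 < ‖f‖ := norm_pos_iff.mpr hf
  have hφf : 0 < φ ‖f‖ := hφpos _ hfnorm
  -- each generator moves f by at most D
  have hgen : ∀ s ∈ S, ‖f - act s f‖ ≤ D := by
    intro s hs
    have h1 : ENNReal.ofReal ‖f - act s f‖ ≤ ⨆ s ∈ S, ENNReal.ofReal ‖f - act s f‖ := by
      exact le_iSup₂ (f := fun s _ => ENNReal.ofReal ‖f - act s f‖) s hs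
    have := ENNReal.toReal_mono hfin h1
    rwa [ENNReal.toReal_ofReal (norm_nonneg _)] at this
  -- product bound
  have key : ∀ l : List G, (∀ x ∈ l, x ∈ S) → ‖f - act l.prod f‖ ≤ l.length * D := by
    intro l
    induction l with
    | nil => intro _; simp [hone]
    | cons s t ih =>
      intro h
      have hs := hgen s (h s (List.mem_cons_self))
      have ht := ih fun x hx => h x (List.mem_cons_of_mem _ hx)
      have heq : f - act (s * t.prod) f = (f - act s f) + act s (f - act t.prod f) := by
        rw [(hlin s).map_sub, hmul]; abel
      calc ‖f - act (List.cons s t).prod f‖ = ‖(f - act s f) + act s (f - act t.prod f)‖ := by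
            rw [List.prod_cons, heq]
        _ ≤ ‖f - act s f‖ + ‖act s (f - act t.prod f)‖ := norm_add_le _ _
        _ = ‖f - act s f‖ + ‖f - act t.prod f‖ := by rw [hiso]
        _ ≤ D + t.length * D := add_le_add hs ht
        _ = (List.cons s t).length * D := by
            simp [List.length_cons]; ring
  -- word length witness
  have hne : {n : ℕ | ∃ l : List G, (∀ x ∈ l, x ∈ S) ∧ l.length = n ∧ l.prod = g}.Nonempty := by
    have hg : g ∈ (Subgroup.closure S).toSubmonoid := by rw [hSgen]; trivial
    rw [Subgroup.closure_toSubmonoid] at hg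
    have : S ∪ S⁻¹ = S := by rw [hSsymm, Set.union_self]
    rw [this] at hg
    obtain ⟨l, hl, hp⟩ := Submonoid.exists_list_of_mem_closure hg
    exact ⟨l.length, l, hl, rfl, hp⟩
  obtain ⟨l, hl, hlen, hprod⟩ : wordLength S g ∈
      {n : ℕ | ∃ l : List G, (∀ x ∈ l, x ∈ S) ∧ l.length = n ∧ l.prod = g} :=
    Nat.sInf_mem hne
  set n := wordLength S g with hn
  have hbound : ‖f - act g f‖ ≤ n * D := by
    have := key l hl
    rwa [hlen, hprod] at this
  have htriv : ‖f - act g f‖ ≤ 2 * ‖f‖ := by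
    calc ‖f - act g f‖ ≤ ‖f‖ + ‖act g f‖ := norm_sub_le _ _
      _ = 2 * ‖f‖ := by rw [hiso]; ring
  rcases le_or_gt ‖f‖ ((n : ℝ) * D) with h | h
  · -- nD ≥ ‖f‖ : φ mono gives φ(nD) ≥ φ‖f‖
    have hnD : (0:ℝ) < n * D := lt_of_lt_of_le hfnorm h
    have hφle : φ ‖f‖ ≤ φ ((n : ℝ) * D) := hφmono hfnorm hnD h
    calc ‖f - act g f‖ ≤ 2 * ‖f‖ := htriv
      _ = 2 * φ ‖f‖ * ‖f‖ / φ ‖f‖ := by field_simp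
      _ ≤ 2 * φ ((n : ℝ) * D) * ‖f‖ / φ ‖f‖ := by
          gcongr
  · rcases Nat.eq_zero_or_pos n with hn0 | hn1
    · -- g = 1
      have hg1 : g = 1 := by
        rw [hn0] at hlen
        have : l = [] := List.length_eq_zero_iff.mp hlen
        rw [this] at hprod; simpa using hprod.symm
      have : ‖f - act g f‖ = 0 := by rw [hg1, hone]; simp
      rw [this]
      apply div_nonneg _ hφf.le
      have hφ' : 0 ≤ φ ((n : ℝ) * D) := by
        rw [hn0]; simpa using hφ0
      positivity
    · -- 0 < nD < ‖f‖ : use sublinearity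
      have hnD : (0:ℝ) < n * D := by positivity
      have hsub := hφsub (Set.mem_Ioi.mpr hnD) (Set.mem_Ioi.mpr hfnorm) h.le
      simp only at hsub
      have hφnD : 0 < φ ((n : ℝ) * D) := hφpos _ hnD
      have hnD_le : (n : ℝ) * D ≤ φ ((n : ℝ) * D) * ‖f‖ / φ ‖f‖ := by
        rw [div_le_div_iff₀ hφnD hφf] at hsub
        rw [le_div_iff₀ hφf]
        nlinarith
      calc ‖f - act g f‖ ≤ (n : ℝ) * D := hbound
        _ ≤ φ ((n : ℝ) * D) * ‖f‖ / φ ‖f‖ := hnD_le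
        _ ≤ 2 * φ ((n : ℝ) * D) * ‖f‖ / φ ‖f‖ := by
            gcongr
            nlinarith
  done

end
end

section
/- Let (Ω,μ) be a coarsely m-to-1 (at some scale s > 0) L^p measure subgroup coupling from H to G, where H, G are locally compact second countable compactly generated unimodular groups with compact symmetric generating sets S_H, S_G, and let p ≥ 1. For f ∈ L^p(G,λ_G) whose support has finite measure, define f̃ ∈ L^p(Ω,μ) by f̃(g∗x) = f(g) for all g ∈ G and x ∈ F_G (well-defined via the isomorphism i_G). Then ‖f̃‖_p^p = ν_G(F_G)·‖f‖_p^p, and ‖∇_H f̃‖_p^p ≤ C·‖∇_G^r f‖_p^p, where C = sup_{h∈S_H} ∫_{F_G} |c_G(h,x)|_G^p dν_G(x), ‖∇_H f̃‖_p = sup_{h∈S_H} ‖f̃ − h∗f̃‖_p is the gradient for the H-action on L^p(Ω,μ) induced by the action of H on Ω, and ‖∇_G^r f‖_p = sup_{t∈S_G} ‖f − ρ(t)f‖_p with (ρ(t)f)(g) = f(gt). -/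
open MeasureTheory ENNReal

noncomputable section

/-! ### Auxiliary lemmas -/

section Aux

open TopologicalSpace Set

/-- A second countable, locally compact Hausdorff space has second countable
one-point compactification. -/
lemma aux_secondCountable_onePoint (X : Type*) [TopologicalSpace X] [T2Space X]
    [LocallyCompactSpace X] [SecondCountableTopology X] :
    SecondCountableTopology (OnePoint X) := by
  obtain ⟨b, hbc, -, hb⟩ := TopologicalSpace.exists_countable_basis X
  let K := CompactExhaustion.choice X
  let B : Set (Set (OnePoint X)) :=
    ((fun u => ((↑) '' u : Set (OnePoint X))) '' b) ∪
      (Set.range fun n => ((↑) '' (K n) : Set (OnePoint X))ᶜ)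
  have hBc : B.Countable := (hbc.image _).union (Set.countable_range _)
  refine (TopologicalSpace.isTopologicalBasis_of_isOpen_of_nhds ?_ ?_).secondCountableTopology hBc
  · rintro u (⟨v, hv, rfl⟩ | ⟨n, rfl⟩)
    · exact OnePoint.isOpen_image_coe.mpr (hb.isOpen hv)
    · exact OnePoint.isOpen_compl_image_coe.mpr ⟨(K.isCompact n).isClosed, K.isCompact n⟩
  · rintro a u hau hu
    induction a using OnePoint.rec with
    | infty =>
      have hcpt : IsCompact (((↑) ⁻¹' u : Set X)ᶜ) := ((OnePoint.isOpen_iff_of_mem hau).mp hu).2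
      obtain ⟨n, hn⟩ := K.exists_superset_of_isCompact hcpt
      refine ⟨((↑) '' (K n) : Set (OnePoint X))ᶜ, Or.inr ⟨n, rfl⟩,
        ?_, ?_⟩
      · simpa using (OnePoint.infty_not_mem_image_coe (s := K n))
      intro y hy
      induction y using OnePoint.rec with
      | infty => exact hau
      | coe z =>
        by_contra hz
        have hz1 : z ∈ ((↑) ⁻¹' u : Set X)ᶜ := hz
        have hz2 : (z : OnePoint X) ∈ ((↑) '' (K n) : Set (OnePoint X)) :=
          ⟨z, hn hz1, rfl⟩
        exact hy hz2
    | coe x =>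
      have hx : x ∈ ((↑) ⁻¹' u : Set X) := hau
      obtain ⟨v, hvb, hxv, hvu⟩ :=
        hb.exists_subset_of_mem_open hx (OnePoint.continuous_coe.isOpen_preimage u hu)
      refine ⟨(↑) '' v, Or.inl ⟨v, hvb, rfl⟩, ⟨x, hxv, rfl⟩, ?_⟩
      rintro y ⟨z, hzv, rfl⟩
      exact hvu hzv

/-- A second countable, locally compact Hausdorff space is Polish. -/
lemma aux_polishSpace (X : Type*) [TopologicalSpace X] [T2Space X]
    [LocallyCompactSpace X] [SecondCountableTopology X] : PolishSpace X := by
  haveI := aux_secondCountable_onePoint X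
  haveI : MetrizableSpace (OnePoint X) := inferInstance
  letI : MetricSpace (OnePoint X) := TopologicalSpace.metrizableSpaceMetric (OnePoint X)
  haveI : CompleteSpace (OnePoint X) := complete_of_compact
  haveI : PolishSpace (OnePoint X) := inferInstance
  haveI : PolishSpace (Set.range ((↑) : X → OnePoint X)) :=
    OnePoint.isOpen_range_coe.polishSpace
  exact ((OnePoint.isOpenEmbedding_coe (X := X)).isEmbedding.toHomeomorph).isClosedEmbedding.polishSpace

/-- Borel sets cannot separate topologically inseparable points. -/
lemma aux_insep_mem_iff {X : Type*} [TopologicalSpace X] [MeasurableSpace X] [BorelSpace X]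
    {x y : X} (hxy : Inseparable x y) {s : Set X} (hs : MeasurableSet s) : x ∈ s ↔ y ∈ s := by
  have hs' : MeasurableSet[MeasurableSpace.generateFrom {u : Set X | IsOpen u}] s := by
    have h2 : MeasurableSet[borel X] s := by
      rw [← BorelSpace.measurable_eq (α := X)]; exact hs
    exact h2
  exact MeasurableSpace.generateFrom_induction {u : Set X | IsOpen u}
    (fun s _ => (x ∈ s ↔ y ∈ s)) (fun t ht _ => hxy.mem_open_iff ht) (by simp)
    (fun t _ h => not_congr h)
    (fun t _ h => by simp only [Set.mem_iUnion]; exact exists_congr fun n => h n) s hs'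

lemma aux_rpow_le_iff {x y : ℝ≥0∞} {p : ℝ} (hp : 0 < p) : x ^ p ≤ y ↔ x ≤ y ^ (1 / p) := by
  constructor
  · intro h
    have h2 := ENNReal.rpow_le_rpow h (le_of_lt (by positivity : (0:ℝ) < 1 / p))
    rwa [← ENNReal.rpow_mul, mul_one_div, div_self hp.ne', ENNReal.rpow_one] at h2
  · intro h
    have h2 := ENNReal.rpow_le_rpow h hp.le
    rwa [← ENNReal.rpow_mul, one_div, inv_mul_cancel₀ hp.ne', ENNReal.rpow_one] at h2

lemma aux_eLpNorm_rpow {α : Type*} [MeasurableSpace α] (μ : Measure α) {p : ℝ}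
    (hp : 0 < p) (f : α → ℝ) :
    eLpNorm f (ENNReal.ofReal p) μ ^ p = ∫⁻ x, (‖f x‖₊ : ℝ≥0∞) ^ p ∂μ := by
  rw [eLpNorm_eq_lintegral_rpow_enorm_toReal (ne_of_gt (ENNReal.ofReal_pos.mpr hp))
    ENNReal.ofReal_ne_top]
  simp only [enorm_eq_nnnorm]
  rw [ENNReal.toReal_ofReal hp.le, ← ENNReal.rpow_mul,
    one_div, inv_mul_cancel₀ hp.ne', ENNReal.rpow_one]

/-- A word of minimal length representing a group element. -/
lemma aux_exists_word {G : Type*} [Group G] {S : Set G} (hsymm : S⁻¹ = S)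
    (hgen : Subgroup.closure S = ⊤) (w : G) :
    ∃ l : List G, (∀ x ∈ l, x ∈ S) ∧ l.length = wordLength S w ∧ l.prod = w := by
  have hmem : w ∈ Submonoid.closure S := by
    have h1 : w ∈ (Subgroup.closure S).toSubmonoid := by
      rw [Subgroup.mem_toSubmonoid, hgen]; trivial
    rw [Subgroup.closure_toSubmonoid, hsymm, Set.union_self] at h1
    exact h1
  obtain ⟨l, hl, hp⟩ := Submonoid.exists_list_of_mem_closure hmem
  have hne : {n : ℕ | ∃ l : List G, (∀ x ∈ l, x ∈ S) ∧ l.length = n ∧ l.prod = w}.Nonempty :=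
    ⟨l.length, l, hl, rfl, hp⟩
  obtain ⟨l', h1, h2, h3⟩ := Nat.sInf_mem hne
  exact ⟨l', h1, h2, h3⟩

/-- Telescoping estimate for right translations along a word. -/
lemma aux_telescope {G : Type*} [Group G] [MeasurableSpace G] [MeasurableMul G]
    (lamG : Measure G) [lamG.IsMulRightInvariant] {q : ℝ≥0∞} (hq : 1 ≤ q)
    {f₀ : G → ℝ} (hf₀ : StronglyMeasurable f₀) (S : Set G) :
    ∀ l : List G, (∀ x ∈ l, x ∈ S) →
      eLpNorm (fun g => f₀ g - f₀ (g * l.prod)) q lamG ≤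
        l.length • ⨆ s ∈ S, eLpNorm (fun g => f₀ g - f₀ (g * s)) q lamG := by
  intro l
  induction l with
  | nil => intro _; simp
  | cons a l ih =>
    intro hmem
    have hSa : a ∈ S := hmem a (List.mem_cons_self)
    have hml : ∀ x ∈ l, x ∈ S := fun x hx => hmem x (List.mem_cons_of_mem a hx)
    have hsm1 : StronglyMeasurable fun g : G => f₀ g - f₀ (g * a) :=
      hf₀.sub (hf₀.comp_measurable (measurable_mul_const a))
    have hsm2 : StronglyMeasurable fun g : G => f₀ g - f₀ (g * l.prod) :=
      hf₀.sub (hf₀.comp_measurable (measurable_mul_const l.prod))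
    have key : (fun g => f₀ g - f₀ (g * (a :: l).prod)) =
        (fun g : G => f₀ g - f₀ (g * a)) +
          ((fun g : G => f₀ g - f₀ (g * l.prod)) ∘ (· * a)) := by
      funext g
      simp only [Pi.add_apply, Function.comp_apply, List.prod_cons, ← mul_assoc]
      ring
    rw [key]
    calc eLpNorm ((fun g : G => f₀ g - f₀ (g * a)) +
            ((fun g : G => f₀ g - f₀ (g * l.prod)) ∘ (· * a))) q lamG
        ≤ eLpNorm (fun g : G => f₀ g - f₀ (g * a)) q lamG +
            eLpNorm ((fun g : G => f₀ g - f₀ (g * l.prod)) ∘ (· * a)) q lamG :=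
          eLpNorm_add_le hsm1.aestronglyMeasurable
            ((hsm2.comp_measurable (measurable_mul_const a)).aestronglyMeasurable) hq
      _ = eLpNorm (fun g : G => f₀ g - f₀ (g * a)) q lamG +
            eLpNorm (fun g : G => f₀ g - f₀ (g * l.prod)) q lamG := by
          rw [eLpNorm_comp_measurePreserving hsm2.aestronglyMeasurable
            (measurePreserving_mul_right lamG a)]
      _ ≤ (⨆ s ∈ S, eLpNorm (fun g : G => f₀ g - f₀ (g * s)) q lamG) +
            l.length • ⨆ s ∈ S, eLpNorm (fun g : G => f₀ g - f₀ (g * s)) q lamG :=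
          add_le_add
            (le_iSup₂ (f := fun s (_ : s ∈ S) =>
              eLpNorm (fun g : G => f₀ g - f₀ (g * s)) q lamG) a hSa) (ih hml)
      _ = (a :: l).length • ⨆ s ∈ S, eLpNorm (fun g : G => f₀ g - f₀ (g * s)) q lamG := by
          rw [List.length_cons, succ_nsmul, add_comm]

end Aux

/-- For a coarsely `m`-to-`1` `L^p` measure subgroup coupling and
`f ∈ L^p(G)` with support of finite measure, the lift `f̃` defined by `f̃(g∗x) = f(g)`
satisfies `‖f̃‖_p^p = ν_G(F_G)·‖f‖_p^p` and `‖∇_H f̃‖_p^p ≤ C·‖∇_G^r f‖_p^p` with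
`C = sup_{h∈S_H} ∫_{F_G} |c_G(h,x)|_G^p dν_G(x)`. -/
theorem lift_norm_and_gradient_bound_Lp
    {H G : Type*}
    [Group H] [TopologicalSpace H] [IsTopologicalGroup H] [LocallyCompactSpace H]
    [SecondCountableTopology H] [MeasurableSpace H] [BorelSpace H]
    [Group G] [TopologicalSpace G] [IsTopologicalGroup G] [LocallyCompactSpace G]
    [SecondCountableTopology G] [MeasurableSpace G] [BorelSpace G]
    (lamH : Measure H) [lamH.IsHaarMeasure] [lamH.IsMulRightInvariant]
    (lamG : Measure G) [lamG.IsHaarMeasure] [lamG.IsMulRightInvariant]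
    (SH : Set H) (hSHcomp : IsCompact SH) (hSHsymm : SH⁻¹ = SH) (hSH1 : (1:H) ∈ SH)
    (hSHgen : Subgroup.closure SH = ⊤)
    (SG : Set G) (hSGcomp : IsCompact SG) (hSGsymm : SG⁻¹ = SG) (hSG1 : (1:G) ∈ SG)
    (hSGgen : Subgroup.closure SG = ⊤)
    (dH : H → H → ℝ) (hdH : IsGoodMetric SH dH)
    (dG : G → G → ℝ) (hdG : IsGoodMetric SG dG)
    {Ω : Type*} (c : MSC H G Ω lamH lamG)
    (m : ℕ) (s : ℝ) (hs : 0 < s) (hcm : c.CoarselyMTo1 dH dG m s)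
    (p : ℝ) (hp : 1 ≤ p) (hLp : c.IsLp SH SG p)
    (f : G → ℝ) (hf : MemLp f (ENNReal.ofReal p) lamG)
    (hsupp : lamG (Function.support f) ≠ ⊤)
    (ftilde : Ω → ℝ)
    (hft : ∀ (g : G), ∀ x ∈ c.FG, ftilde (c.actG g x) = f g) :
    eLpNorm ftilde (ENNReal.ofReal p) c.μ ^ p
        = c.νG c.FG * eLpNorm f (ENNReal.ofReal p) lamG ^ p ∧
      (⨆ h ∈ SH, eLpNorm (fun ω => ftilde ω - ftilde (c.actH h⁻¹ ω))
          (ENNReal.ofReal p) c.μ) ^ p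
        ≤ (⨆ h ∈ SH, ∫⁻ x, (wordLength SG (c.cocG h x) : ℝ≥0∞) ^ p ∂c.νG) *
            eLpGradNorm SG lamG p f ^ p := by
  letI := c.mΩ
  haveI := c.stdBorel
  haveI := c.sigmaFinite_μ
  haveI := c.finite_νG
  have hp0 : 0 < p := lt_of_lt_of_le one_pos hp
  rcases isEmpty_or_nonempty Ω with hΩ | hΩ
  · -- degenerate case: `Ω` is empty
    have hμ0 : c.μ = 0 := Measure.eq_zero_of_isEmpty _
    have hν0 : c.νG = 0 := Measure.eq_zero_of_isEmpty _
    constructor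
    · rw [hμ0, hν0]
      simp [eLpNorm_measure_zero, ENNReal.zero_rpow_of_pos hp0]
    · have h0 : (⨆ h ∈ SH, eLpNorm (fun ω => ftilde ω - ftilde (c.actH h⁻¹ ω))
          (ENNReal.ofReal p) c.μ) = 0 := by
        simp only [hμ0, eLpNorm_measure_zero]
        exact le_antisymm (iSup₂_le fun _ _ => le_rfl) zero_le
      rw [h0, ENNReal.zero_rpow_of_pos hp0]
      exact zero_le
  -- main case: `Ω` nonempty. First, `G` is Hausdorff.
  have keyProd : ∀ t : G, Inseparable t (1 : G) → ∀ S : Set (G × Ω), MeasurableSet S →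
      ∀ ω : Ω, ((t, ω) ∈ S ↔ ((1 : G), ω) ∈ S) := by
    intro t ht S hS
    have hS' : MeasurableSet[MeasurableSpace.generateFrom
        (Set.image2 (· ×ˢ ·) {s : Set G | MeasurableSet s} {u : Set Ω | MeasurableSet u})] S := by
      rw [generateFrom_prod]; exact hS
    refine MeasurableSpace.generateFrom_induction _
      (fun S _ => ∀ ω : Ω, ((t, ω) ∈ S ↔ ((1 : G), ω) ∈ S)) ?_ (by simp)
      (fun u _ h ω => not_congr (h ω))
      (fun u _ h ω => by simp only [Set.mem_iUnion]; exact exists_congr fun n => h n ω) S hS'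
    rintro u ⟨A, hA, B, hB, rfl⟩ - ω
    simp only [Set.mem_prod]
    exact and_congr (aux_insep_mem_iff ht hA) Iff.rfl
  have hT0 : T0Space G := by
    rw [t0Space_iff_inseparable]
    intro a b hab
    have hins : Inseparable (b⁻¹ * a) (1 : G) := by
      have h2 := hab.map (continuous_const.mul continuous_id : Continuous fun z : G => b⁻¹ * z)
      simpa using h2
    obtain ⟨ω0⟩ := hΩ
    obtain ⟨g, hg, -⟩ := c.fund_FG ω0
    have hxFG : c.actG g ω0 ∈ c.FG := hg
    have hmemS := keyProd _ hins ((fun p : G × Ω => c.actG p.1 p.2) ⁻¹' c.FG)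
      (c.measurable_actG c.meas_FG) (c.actG g ω0)
    have h1 : c.actG (1 : G) (c.actG g ω0) ∈ c.FG := by rw [c.actG_one]; exact hxFG
    have h2 : c.actG (b⁻¹ * a) (c.actG g ω0) ∈ c.FG := hmemS.mpr h1
    obtain ⟨g', -, hu⟩ := c.fund_FG (c.actG g ω0)
    have e1 := hu _ h2
    have e2 := hu _ h1
    have e3 : b⁻¹ * a = 1 := e1.trans e2.symm
    exact (inv_mul_eq_one.mp e3).symm
  haveI : T2Space G := inferInstance
  haveI : PolishSpace G := aux_polishSpace G
  haveI : StandardBorelSpace G := inferInstance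
  haveI : StandardBorelSpace {x : Ω // x ∈ c.FG} := c.meas_FG.standardBorel
  -- measurable version of `f`
  have hfaesm := hf.aestronglyMeasurable
  set f₀ : G → ℝ := hfaesm.mk f with hf₀def
  have hf₀sm : StronglyMeasurable f₀ := hfaesm.stronglyMeasurable_mk
  have hff₀ : f =ᵐ[lamG] f₀ := hfaesm.ae_eq_mk
  -- the measurable embedding `T'` and the measurable lift `ψ`
  set T' : G × {x : Ω // x ∈ c.FG} → Ω := fun a => c.actG a.1 a.2.1 with hT'def
  have hT'm : Measurable T' :=
    c.measurable_actG.comp (measurable_fst.prodMk (measurable_subtype_coe.comp measurable_snd))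
  have hT'inj : Function.Injective T' := by
    rintro ⟨a, x, hx⟩ ⟨b, y, hy⟩ hab
    have hab' : c.actG a x = c.actG b y := hab
    have h1 : c.actG (b⁻¹ * a) x = y := by
      rw [c.actG_mul, hab', ← c.actG_mul, inv_mul_cancel, c.actG_one]
    obtain ⟨g', -, hu⟩ := c.fund_FG x
    have e1 : b⁻¹ * a = g' := hu (b⁻¹ * a)
      (by show c.actG (b⁻¹ * a) x ∈ c.FG; rw [h1]; exact hy)
    have e2 : (1 : G) = g' := hu 1
      (by show c.actG (1 : G) x ∈ c.FG; rw [c.actG_one]; exact hx)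
    have e3 : b = a := inv_mul_eq_one.mp (e1.trans e2.symm)
    subst e3
    have e4 : x = y := by
      have h5 := congrArg (c.actG b⁻¹) hab'
      rwa [← c.actG_mul, ← c.actG_mul, inv_mul_cancel, c.actG_one, c.actG_one] at h5
    subst e4
    rfl
  have hT'surj : Function.Surjective T' := by
    intro ω
    obtain ⟨g, hg, -⟩ := c.fund_FG ω
    refine ⟨(g⁻¹, ⟨c.actG g ω, hg⟩), ?_⟩
    show c.actG g⁻¹ (c.actG g ω) = ω
    rw [← c.actG_mul, inv_mul_cancel, c.actG_one]
  have hemb : MeasurableEmbedding T' := hT'm.measurableEmbedding hT'inj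
  obtain ⟨ψ, hψm, hψT⟩ := hemb.exists_measurable_extend
    (hf₀sm.measurable.comp measurable_fst :
      Measurable fun a : G × {x : Ω // x ∈ c.FG} => f₀ a.1) (fun _ => ⟨0⟩)
  have hψ_eval : ∀ (a : G) (x : Ω) (hx : x ∈ c.FG), ψ (c.actG a x) = f₀ a := by
    intro a x hx
    exact congrFun hψT (a, ⟨x, hx⟩)
  -- `ψ` agrees with `ftilde` almost everywhere
  have hNnull : lamG {g : G | ¬ f g = f₀ g} = 0 := by
    rw [← MeasureTheory.ae_iff]; exact hff₀
  obtain ⟨N₀, hN₀sub, hN₀m, hN₀0⟩ := exists_measurable_superset_of_null hNnull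
  have hBadm : MeasurableSet (T' '' (N₀ ×ˢ (Set.univ : Set {x : Ω // x ∈ c.FG}))) :=
    hemb.measurableSet_image.mpr (hN₀m.prod MeasurableSet.univ)
  have hBad0 : c.μ (T' '' (N₀ ×ˢ (Set.univ : Set {x : Ω // x ∈ c.FG}))) = 0 := by
    rw [← c.iso_G, Measure.map_apply c.measurable_actG hBadm]
    refine measure_mono_null (t := (N₀ ×ˢ (Set.univ : Set Ω)) ∪ (Set.univ ×ˢ c.FGᶜ)) ?_ ?_
    · rintro ⟨g, x⟩ hgx
      obtain ⟨⟨a, y⟩, ⟨haN, -⟩, heq⟩ := hgx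
      by_cases hx : x ∈ c.FG
      · left
        have h6 : (a, y) = (g, (⟨x, hx⟩ : {x : Ω // x ∈ c.FG})) :=
          hT'inj (show T' (a, y) = T' (g, ⟨x, hx⟩) from heq)
        have hag : a = g := congrArg Prod.fst h6
        exact ⟨hag ▸ haN, Set.mem_univ _⟩
      · exact Or.inr ⟨Set.mem_univ _, hx⟩
    · refine measure_union_null ?_ ?_
      · rw [Measure.prod_prod, hN₀0, zero_mul]
      · rw [Measure.prod_prod, c.νG_null, mul_zero]
  have hae : ftilde =ᵐ[c.μ] ψ := by
    have hsub : {ω : Ω | ¬ ftilde ω = ψ ω} ⊆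
        T' '' (N₀ ×ˢ (Set.univ : Set {x : Ω // x ∈ c.FG})) := by
      intro ω hω
      obtain ⟨⟨a, x⟩, rfl⟩ := hT'surj ω
      have h1 : ftilde (T' (a, x)) = f a := hft a x.1 x.2
      have h2 : ψ (T' (a, x)) = f₀ a := hψ_eval a x.1 x.2
      have h3 : ¬ f a = f₀ a := by
        intro h4; exact hω (by rw [Set.mem_setOf_eq] at *; rw [h1, h2, h4])
      exact ⟨(a, x), ⟨hN₀sub h3, Set.mem_univ _⟩, rfl⟩
    have h0 : c.μ {ω : Ω | ¬ ftilde ω = ψ ω} = 0 := measure_mono_null hsub hBad0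
    exact MeasureTheory.ae_iff.mpr h0
  -- basic measure facts
  have hνGuniv : c.νG Set.univ = c.νG c.FG := by
    refine le_antisymm ?_ (measure_mono (Set.subset_univ _))
    calc c.νG Set.univ = c.νG (c.FG ∪ c.FGᶜ) := by rw [Set.union_compl_self]
      _ ≤ c.νG c.FG + c.νG c.FGᶜ := measure_union_le _ _
      _ = c.νG c.FG := by rw [c.νG_null, add_zero]
  have haeFG_ν : ∀ᵐ x ∂c.νG, x ∈ c.FG := by
    rw [MeasureTheory.ae_iff]
    exact measure_mono_null (fun x hx => hx) c.νG_null
  have haeFG_prod : ∀ᵐ a ∂(lamG.prod c.νG), a.2 ∈ c.FG := by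
    rw [MeasureTheory.ae_iff]
    refine measure_mono_null (t := (Set.univ : Set G) ×ˢ c.FGᶜ)
      (fun a ha => ⟨Set.mem_univ _, ha⟩) ?_
    rw [Measure.prod_prod, c.νG_null, mul_zero]
  -- Part 1
  have hcongr1 : (fun a : G × Ω => (‖ψ (c.actG a.1 a.2)‖₊ : ℝ≥0∞) ^ p)
      =ᵐ[lamG.prod c.νG] fun a : G × Ω => (‖f₀ a.1‖₊ : ℝ≥0∞) ^ p := by
    refine haeFG_prod.mono fun a ha => ?_
    show (‖ψ (c.actG a.1 a.2)‖₊ : ℝ≥0∞) ^ p = (‖f₀ a.1‖₊ : ℝ≥0∞) ^ p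
    rw [hψ_eval a.1 a.2 ha]
  have hfst := lintegral_map (μ := lamG.prod c.νG) (g := Prod.fst)
    (f := fun g : G => (‖f₀ g‖₊ : ℝ≥0∞) ^ p)
    (hf₀sm.measurable.nnnorm.coe_nnreal_ennreal.pow_const p) measurable_fst
  rw [Measure.map_fst_prod, lintegral_smul_measure, hνGuniv] at hfst
  have part1 : eLpNorm ftilde (ENNReal.ofReal p) c.μ ^ p
      = c.νG c.FG * eLpNorm f (ENNReal.ofReal p) lamG ^ p := by
    calc eLpNorm ftilde (ENNReal.ofReal p) c.μ ^ p
        = eLpNorm ψ (ENNReal.ofReal p) c.μ ^ p := by rw [eLpNorm_congr_ae hae]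
      _ = ∫⁻ ω, (‖ψ ω‖₊ : ℝ≥0∞) ^ p ∂c.μ := aux_eLpNorm_rpow _ hp0 _
      _ = ∫⁻ a : G × Ω, (‖ψ (c.actG a.1 a.2)‖₊ : ℝ≥0∞) ^ p ∂(lamG.prod c.νG) := by
          rw [← c.iso_G]
          exact lintegral_map (hψm.nnnorm.coe_nnreal_ennreal.pow_const p) c.measurable_actG
      _ = ∫⁻ a : G × Ω, (‖f₀ a.1‖₊ : ℝ≥0∞) ^ p ∂(lamG.prod c.νG) := lintegral_congr_ae hcongr1
      _ = c.νG c.FG * ∫⁻ g, (‖f₀ g‖₊ : ℝ≥0∞) ^ p ∂lamG := hfst.symm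
      _ = c.νG c.FG * eLpNorm f (ENNReal.ofReal p) lamG ^ p := by
          rw [eLpNorm_congr_ae hff₀, aux_eLpNorm_rpow _ hp0]
  refine ⟨part1, ?_⟩
  -- Part 2
  have hq1 : (1 : ℝ≥0∞) ≤ ENNReal.ofReal p := ENNReal.one_le_ofReal.mpr hp
  have hGradf₀ : ∀ s : G, eLpNorm (fun g => f₀ g - f₀ (g * s)) (ENNReal.ofReal p) lamG
      = eLpNorm (fun g => f g - f (g * s)) (ENNReal.ofReal p) lamG := by
    intro s
    refine (eLpNorm_congr_ae ?_).symm
    have h2 : (f ∘ fun g : G => g * s) =ᵐ[lamG] (f₀ ∘ fun g : G => g * s) :=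
      (measurePreserving_mul_right lamG s).quasiMeasurePreserving.ae_eq_comp hff₀
    exact hff₀.sub h2
  have hGradEq : (⨆ s ∈ SG, eLpNorm (fun g => f₀ g - f₀ (g * s)) (ENNReal.ofReal p) lamG)
      = eLpGradNorm SG lamG p f := by
    rw [eLpGradNorm]
    exact iSup_congr fun s => iSup_congr fun _ => hGradf₀ s
  have hGradTop : eLpGradNorm SG lamG p f ≠ ⊤ := by
    have hb : eLpGradNorm SG lamG p f ≤
        eLpNorm f (ENNReal.ofReal p) lamG + eLpNorm f (ENNReal.ofReal p) lamG := by
      rw [eLpGradNorm]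
      refine iSup₂_le fun s _ => ?_
      have hcomp : AEStronglyMeasurable (f ∘ fun g : G => g * s) lamG :=
        hfaesm.comp_quasiMeasurePreserving
          (measurePreserving_mul_right lamG s).quasiMeasurePreserving
      calc eLpNorm (fun g => f g - f (g * s)) (ENNReal.ofReal p) lamG
          = eLpNorm (f - (f ∘ fun g : G => g * s)) (ENNReal.ofReal p) lamG := rfl
        _ ≤ eLpNorm f (ENNReal.ofReal p) lamG +
              eLpNorm (f ∘ fun g : G => g * s) (ENNReal.ofReal p) lamG :=
            eLpNorm_sub_le hfaesm hcomp hq1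
        _ = eLpNorm f (ENNReal.ofReal p) lamG + eLpNorm f (ENNReal.ofReal p) lamG := by
            rw [eLpNorm_comp_measurePreserving hfaesm (measurePreserving_mul_right lamG s)]
    exact ne_top_of_le_ne_top (by
      exact ENNReal.add_ne_top.mpr ⟨hf.eLpNorm_ne_top, hf.eLpNorm_ne_top⟩) hb
  have hGpTop : eLpGradNorm SG lamG p f ^ p ≠ ⊤ :=
    ENNReal.rpow_ne_top_of_nonneg hp0.le hGradTop
  have key2 : ∀ h ∈ SH,
      eLpNorm (fun ω => ftilde ω - ftilde (c.actH h⁻¹ ω)) (ENNReal.ofReal p) c.μ ^ p ≤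
        (∫⁻ x, (wordLength SG (c.cocG h⁻¹ x) : ℝ≥0∞) ^ p ∂c.νG) * eLpGradNorm SG lamG p f ^ p := by
    intro h _
    have hactHm : Measurable (c.actH h⁻¹) :=
      c.measurable_actH.comp (measurable_const.prodMk measurable_id)
    have hmp : MeasurePreserving (c.actH h⁻¹) c.μ c.μ := c.measurePreserving_actH h⁻¹
    have haecomp : (ftilde ∘ c.actH h⁻¹) =ᵐ[c.μ] (ψ ∘ c.actH h⁻¹) :=
      hmp.quasiMeasurePreserving.ae_eq_comp hae
    have haeD : (fun ω => ftilde ω - ftilde (c.actH h⁻¹ ω))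
        =ᵐ[c.μ] fun ω => ψ ω - ψ (c.actH h⁻¹ ω) := hae.sub haecomp
    have hDm : Measurable fun ω => ψ ω - ψ (c.actH h⁻¹ ω) := hψm.sub (hψm.comp hactHm)
    have hFm : Measurable fun a : G × Ω =>
        (‖ψ (c.actG a.1 a.2) - ψ (c.actH h⁻¹ (c.actG a.1 a.2))‖₊ : ℝ≥0∞) ^ p :=
      ((hDm.comp c.measurable_actG).nnnorm.coe_nnreal_ennreal).pow_const p
    have hinner : ∀ᵐ x ∂c.νG,
        (∫⁻ g, (‖ψ (c.actG g x) - ψ (c.actH h⁻¹ (c.actG g x))‖₊ : ℝ≥0∞) ^ p ∂lamG) ≤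
          (wordLength SG (c.cocG h⁻¹ x) : ℝ≥0∞) ^ p * eLpGradNorm SG lamG p f ^ p := by
      refine haeFG_ν.mono fun x hx => ?_
      have heval : ∀ g : G, ψ (c.actG g x) - ψ (c.actH h⁻¹ (c.actG g x))
          = f₀ g - f₀ (g * c.cocG h⁻¹ x) := by
        intro g
        have e1 : ψ (c.actG g x) = f₀ g := hψ_eval g x hx
        have e2 : c.actH h⁻¹ (c.actG g x)
            = c.actG (g * c.cocG h⁻¹ x) (c.indActH h⁻¹ x) := by
          rw [c.actions_commute, c.cocycle_spec h⁻¹ x hx, ← c.actG_mul]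
        have e3 : ψ (c.actH h⁻¹ (c.actG g x)) = f₀ (g * c.cocG h⁻¹ x) := by
          rw [e2]; exact hψ_eval _ _ (c.indActH_mem h⁻¹ x hx)
        rw [e1, e3]
      obtain ⟨l, hlmem, hllen, hlprod⟩ := aux_exists_word hSGsymm hSGgen (c.cocG h⁻¹ x)
      calc ∫⁻ g, (‖ψ (c.actG g x) - ψ (c.actH h⁻¹ (c.actG g x))‖₊ : ℝ≥0∞) ^ p ∂lamG
          = ∫⁻ g, (‖f₀ g - f₀ (g * c.cocG h⁻¹ x)‖₊ : ℝ≥0∞) ^ p ∂lamG :=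
            lintegral_congr fun g => by rw [heval g]
        _ = eLpNorm (fun g => f₀ g - f₀ (g * c.cocG h⁻¹ x)) (ENNReal.ofReal p) lamG ^ p :=
            (aux_eLpNorm_rpow _ hp0 _).symm
        _ ≤ ((wordLength SG (c.cocG h⁻¹ x) : ℝ≥0∞) * eLpGradNorm SG lamG p f) ^ p := by
            refine ENNReal.rpow_le_rpow ?_ hp0.le
            calc eLpNorm (fun g => f₀ g - f₀ (g * c.cocG h⁻¹ x)) (ENNReal.ofReal p) lamG
                = eLpNorm (fun g => f₀ g - f₀ (g * l.prod)) (ENNReal.ofReal p) lamG := by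
                  rw [hlprod]
              _ ≤ l.length • ⨆ s ∈ SG,
                    eLpNorm (fun g => f₀ g - f₀ (g * s)) (ENNReal.ofReal p) lamG :=
                  aux_telescope lamG hq1 hf₀sm SG l hlmem
              _ = (wordLength SG (c.cocG h⁻¹ x) : ℝ≥0∞) * eLpGradNorm SG lamG p f := by
                  rw [hGradEq, hllen, nsmul_eq_mul]
        _ = (wordLength SG (c.cocG h⁻¹ x) : ℝ≥0∞) ^ p * eLpGradNorm SG lamG p f ^ p :=
            ENNReal.mul_rpow_of_nonneg _ _ hp0.le
    calc eLpNorm (fun ω => ftilde ω - ftilde (c.actH h⁻¹ ω)) (ENNReal.ofReal p) c.μ ^ p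
        = eLpNorm (fun ω => ψ ω - ψ (c.actH h⁻¹ ω)) (ENNReal.ofReal p) c.μ ^ p := by
          rw [eLpNorm_congr_ae haeD]
      _ = ∫⁻ ω, (‖ψ ω - ψ (c.actH h⁻¹ ω)‖₊ : ℝ≥0∞) ^ p ∂c.μ := aux_eLpNorm_rpow _ hp0 _
      _ = ∫⁻ a : G × Ω, (‖ψ (c.actG a.1 a.2) - ψ (c.actH h⁻¹ (c.actG a.1 a.2))‖₊ : ℝ≥0∞) ^ p
            ∂(lamG.prod c.νG) := by
          rw [← c.iso_G]
          exact lintegral_map (hDm.nnnorm.coe_nnreal_ennreal.pow_const p) c.measurable_actG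
      _ = ∫⁻ x, ∫⁻ g, (‖ψ (c.actG g x) - ψ (c.actH h⁻¹ (c.actG g x))‖₊ : ℝ≥0∞) ^ p ∂lamG
            ∂c.νG := lintegral_prod_symm _ hFm.aemeasurable
      _ ≤ ∫⁻ x, (wordLength SG (c.cocG h⁻¹ x) : ℝ≥0∞) ^ p * eLpGradNorm SG lamG p f ^ p
            ∂c.νG := lintegral_mono_ae hinner
      _ = (∫⁻ x, (wordLength SG (c.cocG h⁻¹ x) : ℝ≥0∞) ^ p ∂c.νG) *
            eLpGradNorm SG lamG p f ^ p :=
          lintegral_mul_const' _ _ hGpTop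
  rw [aux_rpow_le_iff hp0]
  refine iSup₂_le fun h hh => ?_
  rw [← aux_rpow_le_iff hp0]
  refine le_trans (key2 h hh) ?_
  refine mul_le_mul_left ?_ _
  have hinv : h⁻¹ ∈ SH := by
    rw [← hSHsymm]; exact Set.inv_mem_inv.mpr hh
  exact le_iSup₂ (f := fun h' (_ : h' ∈ SH) =>
    ∫⁻ x, (wordLength SG (c.cocG h' x) : ℝ≥0∞) ^ p ∂c.νG) h⁻¹ hinv

end
end
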